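/- arXiv:2105.11383 — 8 statements merged into one kernel-verified Lean document; each statement's English description precedes it below -/
import Mathlib

section
/- Let H be a complex Hilbert space and A : H → H a bounded linear operator. The following are equivalent: (a) A is coercive; (b) A = c(B + iG) for some c ∈ ℂ \ {0} and bounded linear operators B, G on H such that G is self-adjoint and B is strictly positive definite (i.e. B is self-adjoint and there exists β > 0 with ⟨Bφ, φ⟩ ≥ β‖φ‖² for all φ ∈ H); (c) A = c(I + B) for some c ∈ ℂ \ {0} and bounded linear operator B on H with ‖B‖ < 1; (d) 0 does not belong to the closure of the numerical range W(A); (e) there exist θ ∈ ℝ and α > 0 such that Re(e^{iθ}⟨Aφ, φ⟩) ≥ α‖φ‖² for all φ ∈ H. -/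
open scoped ComplexInnerProductSpace

variable {H : Type*} [NormedAddCommGroup H] [InnerProductSpace ℂ H] [CompleteSpace H]

/-- A bounded linear operator `A` on a complex Hilbert space is *coercive* if there exists
`α > 0` such that `|⟨Aφ, φ⟩| ≥ α‖φ‖²` for all `φ`. -/
def Coercive (A : H →L[ℂ] H) : Prop :=
  ∃ α : ℝ, 0 < α ∧ ∀ φ : H, α * ‖φ‖ ^ 2 ≤ ‖⟪A φ, φ⟫‖

/-- The numerical range `W(A) = {⟨Aψ, ψ⟩ : ‖ψ‖ = 1}` of a bounded linear operator. -/
def numericalRange (A : H →L[ℂ] H) : Set ℂ :=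
  {z | ∃ ψ : H, ‖ψ‖ = 1 ∧ z = ⟪A ψ, ψ⟫}

/-!
Since `⟪Aφ, φ⟫ = ‖φ‖² ⟪Aψ, ψ⟫` for `ψ = φ / ‖φ‖`, coercivity says exactly that the numerical range
stays a positive distance away from `0`. By Toeplitz–Hausdorff the numerical range is convex, so
Hahn–Banach puts its closure in a half-plane `α ≤ Re (e^{iθ} z)`: this is (e). Rotating, `A = c T`
with `Re ⟪Tφ, φ⟫ ≥ α‖φ‖²`; splitting `T = ℜ T + i ℑ T` gives (b), and for large `d > 0` the
operator `d⁻¹ T - 1` is a strict contraction, which gives (c). Conversely, both normal forms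
write `A = c T` with `Re ⟪Tφ, φ⟫ ≥ β‖φ‖²`, and then `|⟪Aφ, φ⟫| ≥ |c| β ‖φ‖²`.
-/

open scoped ComplexStarModule
open ComplexConjugate Set

theorem zero_notMem_closure_iff_exists_le_norm {F : Type*} [SeminormedAddCommGroup F]
    {s : Set F} : (0 : F) ∉ closure s ↔ ∃ α : ℝ, 0 < α ∧ ∀ z ∈ s, α ≤ ‖z‖ := by
  simp only [Metric.mem_closure_iff, dist_zero_left]
  push Not
  rfl

theorem Complex.re_mul_eq_norm_mul_re_exp_arg_mul (w z : ℂ) :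
    (w * z).re = ‖w‖ * (Complex.exp (w.arg * Complex.I) * z).re := by
  conv_lhs => rw [← Complex.norm_mul_exp_arg_mul_I w]
  rw [mul_assoc, Complex.re_ofReal_mul]

theorem Convex.exists_le_re_exp_mul_of_zero_notMem_closure {s : Set ℂ} (hs : Convex ℝ s)
    (h0 : (0 : ℂ) ∉ closure s) :
    ∃ θ : ℝ, ∃ α : ℝ, 0 < α ∧ ∀ z ∈ s, α ≤ (Complex.exp (θ * Complex.I) * z).re := by
  rcases s.eq_empty_or_nonempty with rfl | ⟨z₀, hz₀⟩
  · exact ⟨0, 1, one_pos, by simp⟩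
  obtain ⟨f, u, hf0, hfs⟩ :=
    RCLike.geometric_hahn_banach_point_closed (𝕜 := ℂ) hs.closure isClosed_closure h0
  have hf : ∀ z, f z = f 1 * z := fun z => by
    rw [mul_comm, ← smul_eq_mul, ← map_smul, smul_eq_mul, mul_one]
  have hu : 0 < u := by simpa using hf0
  have hsep : ∀ z ∈ s, u < ‖f 1‖ * (Complex.exp ((f 1).arg * Complex.I) * z).re := fun z hz => by
    have := hfs z (subset_closure hz)
    rwa [hf z, RCLike.re_to_complex, Complex.re_mul_eq_norm_mul_re_exp_arg_mul] at this
  have hf1 : 0 < ‖f 1‖ := by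
    refine norm_pos_iff.mpr fun h => hu.not_ge ?_
    simpa [hf z₀, h] using (hfs z₀ (subset_closure hz₀)).le
  refine ⟨(f 1).arg, u / ‖f 1‖, by positivity, fun z hz => ?_⟩
  rw [div_le_iff₀' hf1]
  exact (hsep z hz).le

theorem exists_norm_eq_one_im_conj_mul_add_mul_eq_zero (p q : ℂ) :
    ∃ η : ℂ, ‖η‖ = 1 ∧ (conj η * p + η * q).im = 0 := by
  set η := Complex.exp (↑(-(q - conj p).arg) * Complex.I)
  have hη : η * (q - conj p) = ‖q - conj p‖ := by
    rw [← Complex.norm_mul_exp_arg_mul_I (q - conj p), mul_left_comm, ← Complex.exp_add]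
    simp
  refine ⟨η, Complex.norm_exp_ofReal_mul_I _, ?_⟩
  have him := congrArg Complex.im hη
  simp only [Complex.ofReal_im, Complex.mul_im, Complex.sub_re, Complex.sub_im, Complex.conj_re,
    Complex.conj_im, Complex.add_im] at him ⊢
  linarith

section
variable {E : Type*} [NormedAddCommGroup E] [InnerProductSpace ℂ E]

theorem inner_map_smul_self (A : E →L[ℂ] E) (c : ℂ) (φ : E) :
    ⟪A (c • φ), c • φ⟫ = (‖c‖ ^ 2 : ℝ) * ⟪A φ, φ⟫ := by
  rw [map_smul, inner_smul_left, inner_smul_right, ← mul_assoc, Complex.conj_mul']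
  norm_cast

theorem inner_map_self_div_norm_sq_mem_numericalRange (A : E →L[ℂ] E) {φ : E} (hφ : φ ≠ 0) :
    ⟪A φ, φ⟫ / (‖φ‖ ^ 2 : ℝ) ∈ numericalRange A := by
  have hφ' : ‖φ‖ ≠ 0 := norm_ne_zero_iff.mpr hφ
  refine ⟨(‖φ‖⁻¹ : ℂ) • φ, ?_, ?_⟩
  · rw [norm_smul, norm_inv, Complex.norm_real, norm_norm, inv_mul_cancel₀ hφ']
  · rw [inner_map_smul_self, norm_inv, Complex.norm_real, norm_norm, inv_pow, div_eq_inv_mul]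
    push_cast
    rfl

theorem forall_mul_norm_sq_le_iff_forall_numericalRange (A : E →L[ℂ] E) (f : ℂ → ℝ)
    (hf : ∀ r : ℝ, 0 ≤ r → ∀ z, f (r * z) = r * f z) (α : ℝ) :
    (∀ φ, α * ‖φ‖ ^ 2 ≤ f ⟪A φ, φ⟫) ↔ ∀ ζ ∈ numericalRange A, α ≤ f ζ := by
  constructor
  · rintro h _ ⟨ψ, hψ, rfl⟩
    simpa [hψ] using h ψ
  · intro h φ
    rcases eq_or_ne φ 0 with rfl | hφ
    · simpa using (hf 0 le_rfl 0).ge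
    · have hpos : (0 : ℝ) < ‖φ‖ ^ 2 := by positivity
      have key := hf _ hpos.le (⟪A φ, φ⟫ / (‖φ‖ ^ 2 : ℝ))
      rw [mul_div_cancel₀ _ (by exact_mod_cast hpos.ne')] at key
      rw [key, mul_comm α]
      exact mul_le_mul_of_nonneg_left
        (h _ (inner_map_self_div_norm_sq_mem_numericalRange A hφ)) hpos.le

-- Along `s ↦ s • x + (1 - s) • y` the form takes the real values `s² + s (1 - s) K`, so after
-- normalization it runs continuously from `0` to `1`.
theorem ofReal_mem_numericalRange_of_im_eq_zero (C : E →L[ℂ] E) {x y : E} (hx : ‖x‖ = 1)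
    (hy : ‖y‖ = 1) (h1 : ⟪C x, x⟫ = 1) (h0 : ⟪C y, y⟫ = 0) (hK : (⟪C x, y⟫ + ⟪C y, x⟫).im = 0)
    {t : ℝ} (ht : t ∈ Icc (0 : ℝ) 1) : (t : ℂ) ∈ numericalRange C := by
  set K := (⟪C x, y⟫ + ⟪C y, x⟫).re
  have hK' : ⟪C x, y⟫ + ⟪C y, x⟫ = K := Complex.ext rfl (by simpa using hK)
  set φ : ℝ → E := fun s => (s : ℂ) • x + ((1 - s : ℝ) : ℂ) • y
  have hQ : ∀ s, ⟪C (φ s), φ s⟫ = (s ^ 2 + s * (1 - s) * K : ℝ) := by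
    intro s
    simp only [φ, map_add, map_smul, inner_add_left, inner_add_right, inner_smul_left,
      inner_smul_right, Complex.conj_ofReal, h1, h0]
    push_cast
    linear_combination (s : ℂ) * (1 - s) * hK'
  have hφ : ∀ s, φ s ≠ 0 := by
    intro s hs
    have hQs := congrArg (fun v => ⟪C v, v⟫) (eq_neg_of_add_eq_zero_left hs)
    simp only [map_neg, inner_neg_left, inner_neg_right, neg_neg, inner_map_smul_self, h1, h0,
      mul_one, mul_zero, Complex.ofReal_eq_zero, Complex.norm_real] at hQs
    obtain rfl : s = 0 := by simpa using hQs
    simp only [φ, Complex.ofReal_zero, zero_smul, sub_zero, Complex.ofReal_one, one_smul,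
      zero_add] at hs
    simp [hs] at hy
  set g : ℝ → ℝ := fun s => (s ^ 2 + s * (1 - s) * K) / ‖φ s‖ ^ 2
  have hg : Continuous g := by
    refine Continuous.div (by fun_prop) (by fun_prop) fun s => ?_
    exact pow_ne_zero 2 (norm_ne_zero_iff.mpr (hφ s))
  obtain ⟨s, -, hs⟩ := intermediate_value_Icc zero_le_one hg.continuousOn
    (show t ∈ Icc (g 0) (g 1) by simpa [g, φ, hx, hy] using ht)
  rw [← hs]
  convert inner_map_self_div_norm_sq_mem_numericalRange C (hφ s) using 1
  rw [hQ, ← Complex.ofReal_div]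

theorem ofReal_mem_numericalRange_of_eq_one_of_eq_zero (C : E →L[ℂ] E) {x y : E} (hx : ‖x‖ = 1)
    (hy : ‖y‖ = 1) (h1 : ⟪C x, x⟫ = 1) (h0 : ⟪C y, y⟫ = 0) {t : ℝ} (ht : t ∈ Icc (0 : ℝ) 1) :
    (t : ℂ) ∈ numericalRange C := by
  obtain ⟨η, hη, hK⟩ := exists_norm_eq_one_im_conj_mul_add_mul_eq_zero ⟪C x, y⟫ ⟪C y, x⟫
  refine ofReal_mem_numericalRange_of_im_eq_zero C (x := η • x) ?_ hy ?_ h0 ?_ ht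
  · rw [norm_smul, hη, hx, one_mul]
  · rw [inner_map_smul_self, hη, h1]
    simp
  · rwa [map_smul, inner_smul_left, inner_smul_right]

theorem convex_numericalRange (A : E →L[ℂ] E) : Convex ℝ (numericalRange A) := by
  rw [convex_iff_segment_subset]
  rintro w ⟨y, hy, hw⟩ z ⟨x, hx, hz⟩
  rcases eq_or_ne z w with rfl | hzw
  · rw [segment_same]
    exact singleton_subset_iff.mpr ⟨x, hx, hz⟩
  have hzw' : z - w ≠ 0 := sub_ne_zero.mpr hzw
  set C := conj (z - w)⁻¹ • (A - conj w • 1)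
  have hC : ∀ ψ, ‖ψ‖ = 1 → ⟪C ψ, ψ⟫ = (z - w)⁻¹ * (⟪A ψ, ψ⟫ - w) := fun ψ hψ => by
    simp [C, inner_self_eq_norm_sq_to_K, hψ, mul_comm]
  rw [segment_eq_image_lineMap]
  rintro _ ⟨t, ht, rfl⟩
  obtain ⟨ψ, hψ, hCψ⟩ := ofReal_mem_numericalRange_of_eq_one_of_eq_zero C hx hy
    (by rw [hC x hx, ← hz, inv_mul_cancel₀ hzw']) (by rw [hC y hy, ← hw, sub_self, mul_zero]) ht
  refine ⟨ψ, hψ, ?_⟩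
  rw [hC ψ hψ, eq_inv_mul_iff_mul_eq₀ hzw'] at hCψ
  rw [AffineMap.lineMap_apply, vsub_eq_sub, vadd_eq_add, Complex.real_smul]
  linear_combination hCψ

theorem coercive_iff_zero_notMem_closure_numericalRange (A : E →L[ℂ] E) :
    Coercive A ↔ (0 : ℂ) ∉ closure (numericalRange A) := by
  rw [zero_notMem_closure_iff_exists_le_norm]
  refine exists_congr fun α => and_congr_right fun _ =>
    forall_mul_norm_sq_le_iff_forall_numericalRange A _ (fun r hr z => ?_) α
  rw [norm_mul, Complex.norm_of_nonneg hr]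

theorem exists_le_re_exp_mul_of_zero_notMem_closure_numericalRange {A : E →L[ℂ] E}
    (h : (0 : ℂ) ∉ closure (numericalRange A)) : ∃ θ : ℝ, ∃ α : ℝ, 0 < α ∧ ∀ φ : E,
      α * ‖φ‖ ^ 2 ≤ (Complex.exp ((θ : ℂ) * Complex.I) * ⟪A φ, φ⟫).re := by
  obtain ⟨θ, α, hα, hW⟩ := (convex_numericalRange A).exists_le_re_exp_mul_of_zero_notMem_closure h
  refine ⟨θ, α, hα, (forall_mul_norm_sq_le_iff_forall_numericalRange A _ (fun r _ z => ?_) α).2 hW⟩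
  rw [mul_left_comm, Complex.re_ofReal_mul]

def StrictlyAccretive (T : E →L[ℂ] E) : Prop :=
  ∃ β : ℝ, 0 < β ∧ ∀ φ : E, β * ‖φ‖ ^ 2 ≤ (⟪T φ, φ⟫).re

theorem StrictlyAccretive.coercive_smul {T : E →L[ℂ] E} (hT : StrictlyAccretive T) {c : ℂ}
    (hc : c ≠ 0) : Coercive (c • T) := by
  obtain ⟨β, hβ, h⟩ := hT
  refine ⟨‖c‖ * β, mul_pos (norm_pos_iff.mpr hc) hβ, fun φ => ?_⟩
  rw [smul_apply, inner_smul_left, norm_mul, Complex.norm_conj, mul_assoc]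
  exact mul_le_mul_of_nonneg_left ((h φ).trans (Complex.re_le_norm _)) (norm_nonneg c)

theorem strictlyAccretive_one_add {B : E →L[ℂ] E} (hB : ‖B‖ < 1) : StrictlyAccretive (1 + B) := by
  refine ⟨1 - ‖B‖, sub_pos.mpr hB, fun φ => ?_⟩
  have hBφ : ‖⟪B φ, φ⟫‖ ≤ ‖B‖ * ‖φ‖ ^ 2 := by
    rw [sq, ← mul_assoc]
    exact (norm_inner_le_norm _ _).trans
      (mul_le_mul_of_nonneg_right (B.le_opNorm φ) (norm_nonneg φ))
  have hre : (⟪(1 + B) φ, φ⟫).re = ‖φ‖ ^ 2 + (⟪B φ, φ⟫).re := by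
    simp [inner_self_eq_norm_sq_to_K, ← Complex.ofReal_pow]
  rw [hre]
  linarith [neg_abs_le (⟪B φ, φ⟫).re, Complex.abs_re_le_norm ⟪B φ, φ⟫]

theorem StrictlyAccretive.exists_norm_sub_smul_one_lt {T : E →L[ℂ] E} (hT : StrictlyAccretive T) :
    ∃ d : ℝ, 0 < d ∧ ‖T - (d : ℂ) • 1‖ < d := by
  obtain ⟨β, hβ, h⟩ := hT
  set M := ‖T‖
  -- `‖T - d‖² ≤ d² - 2dβ + M²`, which is `< d²` once `d > M² / (2β)`; the summand `2β` keeps it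
  -- nonnegative.
  set d := 2 * β + M ^ 2 / β
  have hd : 2 * β ≤ d := le_add_of_nonneg_right (by positivity)
  set b := d ^ 2 - 2 * d * β + M ^ 2
  have hb : 0 ≤ b := by nlinarith [sq_nonneg M]
  have hbd : b < d ^ 2 := by
    have : 2 * d * β = 4 * β ^ 2 + 2 * M ^ 2 := by simp only [d]; field_simp; ring
    nlinarith
  have hbound : ∀ φ, ‖(T - (d : ℂ) • 1) φ‖ ≤ √b * ‖φ‖ := fun φ => by
    rw [← pow_le_pow_iff_left₀ (norm_nonneg _) (by positivity) two_ne_zero, mul_pow,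
      Real.sq_sqrt hb]
    have hTφ : ‖T φ‖ ≤ M * ‖φ‖ := T.le_opNorm φ
    have hexp : ‖(T - (d : ℂ) • 1) φ‖ ^ 2
        = ‖T φ‖ ^ 2 - 2 * d * (⟪T φ, φ⟫).re + d ^ 2 * ‖φ‖ ^ 2 := by
      rw [sub_apply, smul_apply, one_apply_eq_self, @norm_sub_sq ℂ, inner_smul_right, norm_smul,
        Complex.norm_real, Real.norm_of_nonneg (by linarith), RCLike.re_to_complex,
        Complex.re_ofReal_mul]
      ring
    nlinarith [h φ, norm_nonneg (T φ), norm_nonneg φ]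
  refine ⟨d, by positivity, ?_⟩
  calc ‖T - (d : ℂ) • 1‖ ≤ √b := ContinuousLinearMap.opNorm_le_bound _ (Real.sqrt_nonneg b) hbound
    _ < d := (Real.sqrt_lt' (by positivity)).mpr hbd

theorem StrictlyAccretive.exists_smul_one_add {T : E →L[ℂ] E} (hT : StrictlyAccretive T) :
    ∃ d : ℂ, d ≠ 0 ∧ ∃ B : E →L[ℂ] E, ‖B‖ < 1 ∧ T = d • (1 + B) := by
  obtain ⟨d, hd, hTd⟩ := hT.exists_norm_sub_smul_one_lt
  have hd' : (d : ℂ) ≠ 0 := by exact_mod_cast hd.ne'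
  refine ⟨d, hd', (d : ℂ)⁻¹ • (T - (d : ℂ) • 1), ?_, ?_⟩
  · rw [norm_smul, norm_inv, Complex.norm_real, Real.norm_of_nonneg hd.le, inv_mul_lt_one₀ hd]
    exact hTd
  · rw [smul_add, smul_smul, mul_inv_cancel₀ hd', one_smul]
    abel

theorem exists_smul_strictlyAccretive_of_le_re_exp_mul {A : E →L[ℂ] E} {θ α : ℝ} (hα : 0 < α)
    (h : ∀ φ : E, α * ‖φ‖ ^ 2 ≤ (Complex.exp ((θ : ℂ) * Complex.I) * ⟪A φ, φ⟫).re) :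
    ∃ c : ℂ, c ≠ 0 ∧ ∃ T : E →L[ℂ] E, StrictlyAccretive T ∧ A = c • T := by
  refine ⟨Complex.exp (θ * Complex.I), Complex.exp_ne_zero _,
    Complex.exp (-(θ * Complex.I)) • A, ⟨α, hα, fun φ => ?_⟩, ?_⟩
  · rw [smul_apply, inner_smul_left, ← Complex.exp_conj]
    simpa using h φ
  · rw [smul_smul, ← Complex.exp_add, add_neg_cancel, Complex.exp_zero, one_smul]

theorem re_inner_add_I_smul_apply_self [CompleteSpace E] (B : E →L[ℂ] E) {G : E →L[ℂ] E}
    (hG : IsSelfAdjoint G) (φ : E) : (⟪(B + Complex.I • G) φ, φ⟫).re = (⟪B φ, φ⟫).re := by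
  have hGφ : (⟪G φ, φ⟫).im = 0 := hG.isSymmetric.im_inner_apply_self φ
  simp [hGφ]

theorem strictlyAccretive_add_I_smul_iff [CompleteSpace E] {B G : E →L[ℂ] E}
    (hG : IsSelfAdjoint G) : StrictlyAccretive (B + Complex.I • G) ↔ StrictlyAccretive B := by
  simp only [StrictlyAccretive, re_inner_add_I_smul_apply_self B hG]

theorem StrictlyAccretive.realPart [CompleteSpace E] {T : E →L[ℂ] E} (hT : StrictlyAccretive T) :
    StrictlyAccretive (ℜ T : E →L[ℂ] E) := by
  rw [← strictlyAccretive_add_I_smul_iff (ℑ T).2, realPart_add_I_smul_imaginaryPart]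
  exact hT

end

/-- Equivalent formulations of coercivity: (a) ↔ (b), (a) ↔ (c), (a) ↔ (d), (a) ↔ (e). -/
theorem coercive_iff_equivalents (A : H →L[ℂ] H) :
    (Coercive A ↔
      ∃ c : ℂ, c ≠ 0 ∧ ∃ B G : H →L[ℂ] H, IsSelfAdjoint G ∧
        (IsSelfAdjoint B ∧ ∃ β : ℝ, 0 < β ∧ ∀ φ : H, β * ‖φ‖ ^ 2 ≤ (⟪B φ, φ⟫).re) ∧
        A = c • (B + Complex.I • G)) ∧
    (Coercive A ↔
      ∃ c : ℂ, c ≠ 0 ∧ ∃ B : H →L[ℂ] H, ‖B‖ < 1 ∧ A = c • ((1 : H →L[ℂ] H) + B)) ∧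
    (Coercive A ↔ (0 : ℂ) ∉ closure (numericalRange A)) ∧
    (Coercive A ↔ ∃ θ : ℝ, ∃ α : ℝ, 0 < α ∧ ∀ φ : H,
      α * ‖φ‖ ^ 2 ≤ (Complex.exp ((θ : ℂ) * Complex.I) * ⟪A φ, φ⟫).re) := by
  have hd := coercive_iff_zero_notMem_closure_numericalRange A
  have hde := exists_le_re_exp_mul_of_zero_notMem_closure_numericalRange (A := A)
  have het : (∃ θ : ℝ, ∃ α : ℝ, 0 < α ∧ ∀ φ : H,
      α * ‖φ‖ ^ 2 ≤ (Complex.exp ((θ : ℂ) * Complex.I) * ⟪A φ, φ⟫).re) →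
      ∃ c : ℂ, c ≠ 0 ∧ ∃ T : H →L[ℂ] H, StrictlyAccretive T ∧ A = c • T :=
    fun ⟨_, _, hα, h⟩ => exists_smul_strictlyAccretive_of_le_re_exp_mul hα h
  have hacc : Coercive A ↔ ∃ c : ℂ, c ≠ 0 ∧ ∃ T : H →L[ℂ] H, StrictlyAccretive T ∧ A = c • T :=
    ⟨fun h => het (hde (hd.1 h)), fun ⟨c, hc, T, hT, hA⟩ => hA ▸ hT.coercive_smul hc⟩
  refine ⟨hacc.trans (exists_congr fun c => and_congr_right fun _ => ⟨?_, ?_⟩), hacc.trans ⟨?_, ?_⟩,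
    hd, ⟨fun h => hde (hd.1 h), fun h => hacc.2 (het h)⟩⟩
  · rintro ⟨T, hT, rfl⟩
    exact ⟨ℜ T, ℑ T, (ℑ T).2, ⟨(ℜ T).2, hT.realPart⟩, by rw [realPart_add_I_smul_imaginaryPart]⟩
  · rintro ⟨B, G, hG, ⟨-, hB⟩, rfl⟩
    exact ⟨_, (strictlyAccretive_add_I_smul_iff hG).2 hB, rfl⟩
  · rintro ⟨c, hc, T, hT, rfl⟩
    obtain ⟨d, hd0, B, hB, rfl⟩ := hT.exists_smul_one_add
    exact ⟨c * d, mul_ne_zero hc hd0, B, hB, smul_smul c d _⟩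
  · rintro ⟨c, hc, B, hB, rfl⟩
    exact ⟨c, hc, _, strictlyAccretive_one_add hB, rfl⟩
end

section
/- Let H be a complex Hilbert space and A : H → H a bounded linear operator. Then A can be written as the sum of a coercive operator and a compact operator (i.e. there exists a compact linear operator K on H such that A − K is coercive) if and only if 0 does not belong to the essential numerical range W_ess(A). -/
open scoped ComplexInnerProductSpace

variable {H : Type*} [NormedAddCommGroup H] [InnerProductSpace ℂ H] [CompleteSpace H]

/-- The essential numerical range `W_ess(A) = ⋂_{K compact} closure (W(A + K))`. -/
def essNumericalRange (A : H →L[ℂ] H) : Set ℂ :=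
  ⋂ (K : H →L[ℂ] H) (_ : IsCompactOperator ⇑K), closure (numericalRange (A + K))

/-- `A` is the sum of a coercive and a compact operator iff `0 ∉ W_ess(A)`. -/
theorem coercive_plus_compact_iff_zero_not_mem_essNumericalRange (A : H →L[ℂ] H) :
    (∃ K : H →L[ℂ] H, IsCompactOperator ⇑K ∧ Coercive (A - K)) ↔
      (0 : ℂ) ∉ essNumericalRange A := by
  constructor
  · rintro ⟨K, hK, α, hα, hcoer⟩ h0
    simp only [essNumericalRange, Set.mem_iInter] at h0
    have hK' : IsCompactOperator ⇑(-K) := by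
      simpa [ContinuousLinearMap.coe_neg'] using hK.neg
    have h0' := h0 (-K) hK'
    rw [show A + -K = A - K from (sub_eq_add_neg A K).symm] at h0'
    have hsub : numericalRange (A - K) ⊆ {z : ℂ | α ≤ ‖z‖} := by
      rintro z ⟨ψ, hψ, rfl⟩
      have := hcoer ψ
      rw [hψ] at this
      simpa using this
    have hclosed : IsClosed {z : ℂ | α ≤ ‖z‖} :=
      isClosed_le continuous_const continuous_norm
    have : α ≤ ‖(0 : ℂ)‖ := (closure_minimal hsub hclosed) h0'
    simp at this
    exact absurd this (not_le.mpr hα)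
  · intro h0
    simp only [essNumericalRange, Set.mem_iInter, not_forall] at h0
    obtain ⟨K, hK, h0⟩ := h0
    rw [Metric.mem_closure_iff] at h0
    push_neg at h0
    obtain ⟨ε, hε, hb⟩ := h0
    refine ⟨-K, by simpa [ContinuousLinearMap.coe_neg'] using hK.neg, ε, hε, fun φ => ?_⟩
    rw [show A - -K = A + K from sub_neg_eq_add A K]
    rcases eq_or_ne φ 0 with rfl | hφ
    · simp
    · have hφn : (0 : ℝ) < ‖φ‖ := norm_pos_iff.mpr hφ
      set c : ℂ := (‖φ‖ : ℂ)⁻¹ with hc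
      have hcφ : ‖c • φ‖ = 1 := by
        rw [norm_smul, hc]
        simp [norm_inv, inv_mul_cancel₀ hφn.ne']
      have hmem : ⟪(A + K) (c • φ), c • φ⟫ ∈ numericalRange (A + K) :=
        ⟨c • φ, hcφ, rfl⟩
      have hd := hb _ hmem
      rw [dist_zero_left] at hd
      have hval : ⟪(A + K) (c • φ), c • φ⟫ = (starRingEnd ℂ) c * c * ⟪(A + K) φ, φ⟫ := by
        rw [map_smul, inner_smul_left, inner_smul_right]; ring
      rw [hval] at hd
      have hcnorm : ‖(starRingEnd ℂ) c * c‖ = (‖φ‖ ^ 2)⁻¹ := by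
        rw [norm_mul, RCLike.norm_conj, hc]
        simp [norm_inv, sq]
      rw [norm_mul, hcnorm] at hd
      have h2 : (0 : ℝ) < ‖φ‖ ^ 2 := by positivity
      calc ε * ‖φ‖ ^ 2 ≤ ((‖φ‖ ^ 2)⁻¹ * ‖⟪(A + K) φ, φ⟫‖) * ‖φ‖ ^ 2 := by
            exact mul_le_mul_of_nonneg_right hd h2.le
        _ = ‖⟪(A + K) φ, φ⟫‖ := by field_simp
end

section
/- (Céa's Lemma.) Let H be a complex Hilbert space and A : H → H a bounded coercive linear operator, with coercivity constant α > 0, i.e. |⟨Aφ, φ⟩| ≥ α‖φ‖² for all φ ∈ H. Then A is invertible and, for every g ∈ H and every finite-dimensional subspace H_N of H, there exists a unique φ_N ∈ H_N satisfying ⟨Aφ_N, ψ_N⟩ = ⟨g, ψ_N⟩ for all ψ_N ∈ H_N, and this Galerkin solution satisfies ‖φ − φ_N‖ ≤ (‖A‖/α) · inf{‖φ − ψ‖ : ψ ∈ H_N}, where φ := A⁻¹g. -/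
/-!
Coercivity passes to the Galerkin compression `P_V ∘ A ∘ ι_V` of `A` onto any closed subspace
`V`, because `⟪P_V (A x), x⟫ = ⟪A x, x⟫` for `x ∈ V`. A coercive operator on a Hilbert space is
invertible (it is bounded below and its range has trivial orthogonal complement), so both `A`
and its compression are bijective, and the Galerkin solutions are exactly the preimages of
`P_V g` under the compression. For Céa's estimate, Galerkin orthogonality `⟪A (φ - x), χ⟫ = 0`
for `χ ∈ V` lets one replace `φ - x` by `φ - ψ` in the second slot:
`α ‖φ - x‖² ≤ |⟪A (φ - x), φ - ψ⟫| ≤ ‖A‖ ‖φ - x‖ ‖φ - ψ‖`.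
-/

open scoped ComplexInnerProductSpace

variable {H : Type*} [NormedAddCommGroup H] [InnerProductSpace ℂ H] [CompleteSpace H]

/-- `x` is a Galerkin solution in the subspace `V` for the equation `A φ = g`:
`x ∈ V` and `⟨A x, ψ⟩ = ⟨g, ψ⟩` for all `ψ ∈ V`. -/
def IsGalerkinSolution (A : H →L[ℂ] H) (V : Submodule ℂ H) (g x : H) : Prop :=
  x ∈ V ∧ ∀ ψ ∈ V, ⟪A x, ψ⟫ = ⟪g, ψ⟫

section Coercive

open scoped InnerProductSpace

variable {𝕜 E : Type*} [RCLike 𝕜] [NormedAddCommGroup E] [InnerProductSpace 𝕜 E]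

def ContinuousLinearMap.IsCoerciveWith (A : E →L[𝕜] E) (α : ℝ) : Prop :=
  ∀ x, α * ‖x‖ ^ 2 ≤ ‖⟪A x, x⟫_𝕜‖

namespace ContinuousLinearMap.IsCoerciveWith

variable {A : E →L[𝕜] E} {α : ℝ}

theorem bijective [CompleteSpace E] (hA : A.IsCoerciveWith α) (hα : 0 < α) :
    Function.Bijective A :=
  isUnit_iff_bijective.mp <|
    A.isUnit_of_forall_le_norm_inner_map (c := ⟨α, hα.le⟩) hα fun x => by
      rw [mul_comm]; exact hA x

theorem orthogonalProjectionOnto_comp (hA : A.IsCoerciveWith α) (V : Submodule 𝕜 E)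
    [V.HasOrthogonalProjection] :
    (V.orthogonalProjectionOnto ∘L A ∘L V.subtypeL).IsCoerciveWith α := fun x => by
  rw [comp_apply, comp_apply, V.inner_orthogonalProjectionOnto_eq_of_mem_right]
  exact hA x

theorem norm_sub_le_div_mul_of_inner_map_sub_eq_zero (hA : A.IsCoerciveWith α) (hα : 0 < α)
    {V : Submodule 𝕜 E} {φ x ψ : E} (hx : x ∈ V) (hψ : ψ ∈ V)
    (horth : ∀ χ ∈ V, ⟪A (φ - x), χ⟫_𝕜 = 0) :
    ‖φ - x‖ ≤ ‖A‖ / α * ‖φ - ψ‖ := by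
  have hswap : ⟪A (φ - x), φ - x⟫_𝕜 = ⟪A (φ - x), φ - ψ⟫_𝕜 := by
    have h := horth (ψ - x) (V.sub_mem hψ hx)
    rw [← sub_eq_zero, ← inner_sub_right, ← h]
    congr 1
    abel
  have hsq : α * ‖φ - x‖ ^ 2 ≤ ‖A‖ * ‖φ - ψ‖ * ‖φ - x‖ :=
    calc α * ‖φ - x‖ ^ 2 ≤ ‖⟪A (φ - x), φ - ψ⟫_𝕜‖ := hswap ▸ hA (φ - x)
      _ ≤ ‖A (φ - x)‖ * ‖φ - ψ‖ := norm_inner_le_norm _ _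
      _ ≤ ‖A‖ * ‖φ - x‖ * ‖φ - ψ‖ := by gcongr; exact A.le_opNorm _
      _ = ‖A‖ * ‖φ - ψ‖ * ‖φ - x‖ := by ring
  rcases (norm_nonneg (φ - x)).eq_or_lt with h0 | hpos
  · rw [← h0]
    positivity
  · rw [div_mul_eq_mul_div, le_div_iff₀ hα]
    nlinarith

end ContinuousLinearMap.IsCoerciveWith

end Coercive

open scoped Pointwise in
theorem Real.le_mul_sInf_image {ι : Type*} {a c : ℝ} (hc : 0 ≤ c) {s : Set ι} (hs : s.Nonempty)
    {f : ι → ℝ} (h : ∀ i ∈ s, a ≤ c * f i) : a ≤ c * sInf (f '' s) := by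
  rw [← smul_eq_mul, ← Real.sInf_smul_of_nonneg hc, ← Set.image_smul, Set.image_image]
  exact le_csInf (hs.image _) (Set.forall_mem_image.mpr h)

section Galerkin

variable {E : Type*} [NormedAddCommGroup E] [InnerProductSpace ℂ E]

theorem isGalerkinSolution_iff_orthogonalProjectionOnto_comp_apply_eq (A : E →L[ℂ] E)
    (V : Submodule ℂ E) [V.HasOrthogonalProjection] (g : E) (x : V) :
    IsGalerkinSolution A V g x ↔
      (V.orthogonalProjectionOnto ∘L A ∘L V.subtypeL) x = V.orthogonalProjectionOnto g := by
  rw [IsGalerkinSolution, and_iff_right x.2]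
  constructor
  · intro h
    refine ext_inner_right ℂ fun ψ => ?_
    simpa using h ψ ψ.2
  · intro h ψ hψ
    simpa using congrArg (⟪·, (⟨ψ, hψ⟩ : V)⟫) h

theorem existsUnique_isGalerkinSolution {A : E →L[ℂ] E} {α : ℝ} (hA : A.IsCoerciveWith α)
    (hα : 0 < α) (V : Submodule ℂ E) [CompleteSpace V] (g : E) :
    ∃! x : E, IsGalerkinSolution A V g x := by
  have hbij := (hA.orthogonalProjectionOnto_comp V).bijective hα
  obtain ⟨x, hx⟩ := hbij.2 (V.orthogonalProjectionOnto g)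
  refine ⟨x, (isGalerkinSolution_iff_orthogonalProjectionOnto_comp_apply_eq A V g x).mpr hx, ?_⟩
  rintro y hy
  lift y to V using hy.1
  rw [isGalerkinSolution_iff_orthogonalProjectionOnto_comp_apply_eq] at hy
  exact congrArg Subtype.val (hbij.1 (hy.trans hx.symm))

theorem IsGalerkinSolution.inner_map_sub_eq_zero {A : E →L[ℂ] E} {V : Submodule ℂ E} {g x φ : E}
    (hx : IsGalerkinSolution A V g x) (hφ : A φ = g) : ∀ χ ∈ V, ⟪A (φ - x), χ⟫ = 0 := by
  intro χ hχ
  rw [map_sub, inner_sub_left, hφ, hx.2 χ hχ, sub_self]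

end Galerkin

/-- Céa's Lemma: if `A` is coercive with coercivity constant `α > 0`, then `A` is invertible
and for every `g` and every finite-dimensional subspace `V` there is a unique Galerkin
solution `φ_N ∈ V`, which satisfies `‖φ − φ_N‖ ≤ (‖A‖/α) inf_{ψ ∈ V} ‖φ − ψ‖` where
`φ = A⁻¹ g`. -/
theorem cea_lemma (A : H →L[ℂ] H) (α : ℝ) (hα : 0 < α)
    (hcoer : ∀ φ : H, α * ‖φ‖ ^ 2 ≤ ‖⟪A φ, φ⟫‖) :
    Function.Bijective A ∧
    ∀ (g : H) (V : Submodule ℂ H), FiniteDimensional ℂ V →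
      (∃! x : H, IsGalerkinSolution A V g x) ∧
      ∀ x : H, IsGalerkinSolution A V g x → ∀ φ : H, A φ = g →
        ‖φ - x‖ ≤ (‖A‖ / α) * sInf ((fun ψ : H => ‖φ - ψ‖) '' (V : Set H)) := by
  have hA : A.IsCoerciveWith α := hcoer
  refine ⟨hA.bijective hα, fun g V _ => ?_⟩
  have : CompleteSpace V := FiniteDimensional.complete ℂ V
  refine ⟨existsUnique_isGalerkinSolution hA hα V g, fun x hx φ hφ => ?_⟩
  exact Real.le_mul_sInf_image (by positivity) ⟨0, V.zero_mem⟩ fun ψ hψ =>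
    hA.norm_sub_le_div_mul_of_inner_map_sub_eq_zero hα hx.1 hψ (hx.inner_map_sub_eq_zero hφ)
end

section
/- Let H be a complex Hilbert space and (K_n)_{n≥1} a sequence of bounded self-adjoint linear operators on H that is collectively compact, meaning that the set ⋃_{n∈ℕ} {K_n φ : φ ∈ H, ‖φ‖ ≤ 1} is relatively compact in H. Then for every sequence (φ_n) in H converging weakly to 0, one has ‖K_n φ_n‖ → 0 as n → ∞. -/
open scoped ComplexInnerProductSpace

variable {H : Type*} [NormedAddCommGroup H] [InnerProductSpace ℂ H] [CompleteSpace H]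

/-- If `(K n)` is a collectively compact sequence of self-adjoint bounded linear operators
on a complex Hilbert space (i.e. `⋃ n, K n '' {‖φ‖ ≤ 1}` is relatively compact), and
`φ n ⇀ 0` weakly, then `‖K n (φ n)‖ → 0`. -/
theorem collectivelyCompact_selfAdjoint_tendsto_zero
    (K : ℕ → H →L[ℂ] H) (hsa : ∀ n, IsSelfAdjoint (K n))
    (hcc : IsCompact (closure (⋃ n : ℕ, ⇑(K n) '' {φ : H | ‖φ‖ ≤ 1})))
    (φ : ℕ → H)
    (hw : ∀ ψ : H, Filter.Tendsto (fun n => ⟪φ n, ψ⟫) Filter.atTop (nhds (0 : ℂ))) :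
    Filter.Tendsto (fun n => ‖(K n) (φ n)‖) Filter.atTop (nhds (0 : ℝ)) := by
  classical
  -- `φ` is bounded, by Banach–Steinhaus
  obtain ⟨C, hC0, hC⟩ : ∃ C : ℝ, 0 < C ∧ ∀ n, ‖φ n‖ ≤ C := by
    have hpt : ∀ ψ : H, ∃ M, ∀ n, ‖innerSL ℂ (φ n) ψ‖ ≤ M := by
      intro ψ
      obtain ⟨M, hM⟩ := ((hw ψ).norm).bddAbove_range
      exact ⟨M, fun n => hM ⟨n, rfl⟩⟩
    obtain ⟨C', hC'⟩ := banach_steinhaus hpt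
    refine ⟨max C' 1, lt_of_lt_of_le one_pos (le_max_right _ _), fun n => ?_⟩
    calc ‖φ n‖ = ‖innerSL ℂ (φ n)‖ := (innerSL_apply_norm ℂ (φ n)).symm
      _ ≤ C' := hC' n
      _ ≤ max C' 1 := le_max_left _ _
  set S := closure (⋃ n : ℕ, ⇑(K n) '' {φ : H | ‖φ‖ ≤ 1}) with hS
  have hmem : ∀ (n : ℕ) (y : H), ‖y‖ ≤ 1 → K n y ∈ S :=
    fun n y hy => subset_closure (Set.mem_iUnion.2 ⟨n, ⟨y, hy, rfl⟩⟩)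
  have hCne : (C : ℂ) ≠ 0 := by
    exact_mod_cast ne_of_gt hC0
  -- Key lemma: for any fixed y, ⟪K n y, φ n⟫ → 0
  have key : ∀ y : H, Filter.Tendsto (fun n => ⟪K n y, φ n⟫) Filter.atTop (nhds (0 : ℂ)) := by
    intro y
    set D : ℝ := max ‖y‖ 1 with hD
    have hD1 : (1 : ℝ) ≤ D := le_max_right _ _
    have hD0 : (0 : ℝ) < D := lt_of_lt_of_le one_pos hD1
    have hDne : (D : ℂ) ≠ 0 := by exact_mod_cast ne_of_gt hD0
    have hynorm : ‖(D : ℂ)⁻¹ • y‖ ≤ 1 := by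
      rw [norm_smul, norm_inv, Complex.norm_real, Real.norm_of_nonneg hD0.le]
      rw [inv_mul_le_iff₀ hD0, mul_one]
      exact le_max_left _ _
    apply Filter.tendsto_of_subseq_tendsto
    intro ns hns
    obtain ⟨a, -, ms, hms, hlim⟩ :=
      hcc.tendsto_subseq (x := fun k => K (ns k) ((D : ℂ)⁻¹ • y))
        (fun k => hmem _ _ hynorm)
    refine ⟨ms, ?_⟩
    have hKy : Filter.Tendsto (fun k => K (ns (ms k)) y) Filter.atTop (nhds ((D : ℂ) • a)) := by
      have h1 := hlim.const_smul (D : ℂ)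
      refine h1.congr fun k => ?_
      simp only [Function.comp_apply, ← map_smul, smul_inv_smul₀ hDne]
    have h1 : Filter.Tendsto (fun k => ⟪K (ns (ms k)) y - (D : ℂ) • a, φ (ns (ms k))⟫)
        Filter.atTop (nhds (0 : ℂ)) := by
      refine squeeze_zero_norm (fun k => (norm_inner_le_norm _ _).trans
          (mul_le_mul_of_nonneg_left (hC _) (norm_nonneg _))) ?_
      · have : Filter.Tendsto (fun k => ‖K (ns (ms k)) y - (D : ℂ) • a‖)
            Filter.atTop (nhds 0) := by
          simpa using (hKy.sub (tendsto_const_nhds (x := (D : ℂ) • a))).norm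
        simpa using this.mul_const C
    have h2 : Filter.Tendsto (fun k => ⟪(D : ℂ) • a, φ (ns (ms k))⟫)
        Filter.atTop (nhds (0 : ℂ)) := by
      have h3 := (hw ((D : ℂ) • a)).comp (hns.comp hms.tendsto_atTop)
      have h4 := h3.star
      simp only [Function.comp_apply, star_zero] at h4 ⊢
      refine h4.congr fun k => ?_
      simp [inner_conj_symm]
    have := h1.add h2
    simp only [inner_sub_left, sub_add_cancel, add_zero] at this
    simpa using this
  -- Main argument
  apply Filter.tendsto_of_subseq_tendsto
  intro ns hns
  have hφnorm : ∀ n, ‖(C : ℂ)⁻¹ • φ n‖ ≤ 1 := by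
    intro n
    rw [norm_smul, norm_inv, Complex.norm_real, Real.norm_of_nonneg hC0.le]
    rw [inv_mul_le_iff₀ hC0, mul_one]
    exact hC n
  obtain ⟨a, -, ms, hms, hlim⟩ :=
    hcc.tendsto_subseq (x := fun k => K (ns k) ((C : ℂ)⁻¹ • φ (ns k)))
      (fun k => hmem _ _ (hφnorm _))
  refine ⟨ms, ?_⟩
  have hKφ : Filter.Tendsto (fun k => K (ns (ms k)) (φ (ns (ms k)))) Filter.atTop
      (nhds ((C : ℂ) • a)) := by
    have h1 := hlim.const_smul (C : ℂ)
    refine h1.congr fun k => ?_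
    simp only [Function.comp_apply, ← map_smul, smul_inv_smul₀ hCne]
  set χ : H := (C : ℂ) • a with hχ
  have hχ0 : χ = 0 := by
    have h1 : Filter.Tendsto (fun k => ⟪χ, K (ns (ms k)) (φ (ns (ms k)))⟫)
        Filter.atTop (nhds ⟪χ, χ⟫) := tendsto_const_nhds.inner hKφ
    have h2 : (fun k => ⟪χ, K (ns (ms k)) (φ (ns (ms k)))⟫)
        = fun k => ⟪K (ns (ms k)) χ, φ (ns (ms k))⟫ := by
      funext k
      have hadj : ContinuousLinearMap.adjoint (K (ns (ms k))) = K (ns (ms k)) :=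
        ContinuousLinearMap.isSelfAdjoint_iff'.mp (hsa _)
      rw [← ContinuousLinearMap.adjoint_inner_left, hadj]
    have h3 : Filter.Tendsto (fun k => ⟪K (ns (ms k)) χ, φ (ns (ms k))⟫)
        Filter.atTop (nhds (0 : ℂ)) :=
      (key χ).comp (hns.comp hms.tendsto_atTop)
    rw [h2] at h1
    exact inner_self_eq_zero.mp (tendsto_nhds_unique h1 h3)
  rw [hχ0] at hKφ
  simpa using hKφ.norm
end

section
/- Let H be a complex Hilbert space, A : H → H a bounded linear operator, and T : H → H a linear isometry (⟨Tφ, Tψ⟩ = ⟨φ, ψ⟩ for all φ, ψ ∈ H) such that T commutes with A (TA = AT) and T^n → 0 weakly as n → ∞ (i.e. for every φ, ψ ∈ H, ⟨T^n φ, ψ⟩ → 0). Then W_ess(A) = closure(W(A)) and ‖A‖_ess = ‖A‖. -/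
open scoped ComplexInnerProductSpace
open Filter

variable {H : Type*} [NormedAddCommGroup H] [InnerProductSpace ℂ H] [CompleteSpace H]

/-- The essential norm `‖A‖_ess = inf {‖A − K‖ : K compact}` of a bounded linear operator. -/
noncomputable def essNorm (A : H →L[ℂ] H) : ℝ :=
  sInf {r : ℝ | ∃ K : H →L[ℂ] H, IsCompactOperator ⇑K ∧ r = ‖A - K‖}

/-- A compact operator sends a bounded weakly-null sequence to a norm-null sequence. -/
lemma compact_apply_tendsto_zero_of_weak_null (K : H →L[ℂ] H)
    (hK : IsCompactOperator ⇑K) (x : ℕ → H) (hx : ∀ n, ‖x n‖ ≤ 1)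
    (hw : ∀ y : H, Tendsto (fun n => ⟪x n, y⟫) atTop (nhds (0 : ℂ))) :
    Tendsto (fun n => K (x n)) atTop (nhds (0 : H)) := by
  obtain ⟨C, hCc, hCm⟩ := hK
  obtain ⟨ε, hε, hball⟩ := Metric.mem_nhds_iff.mp hCm
  set c : ℂ := ((ε / 2 : ℝ) : ℂ) with hc
  have hc0 : c ≠ 0 := by
    simp only [hc, ne_eq, Complex.ofReal_eq_zero]
    positivity
  have hmem : ∀ n, c • K (x n) ∈ C := by
    intro n
    have : c • x n ∈ Metric.ball (0 : H) ε := by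
      rw [mem_ball_zero_iff, norm_smul]
      have : ‖c‖ = ε / 2 := by
        rw [hc, Complex.norm_real, Real.norm_eq_abs, abs_of_pos (by positivity)]
      rw [this]
      calc ε / 2 * ‖x n‖ ≤ ε / 2 * 1 := by
            apply mul_le_mul_of_nonneg_left (hx n) (by positivity)
        _ < ε := by linarith
    have := hball this
    rwa [Set.mem_preimage, map_smul] at this
  set C' : Set H := (fun y => c⁻¹ • y) '' C with hC'
  have hC'c : IsCompact C' := hCc.image (continuous_const_smul _)
  have hmem' : ∀ n, K (x n) ∈ C' := by
    intro n
    refine ⟨c • K (x n), hmem n, ?_⟩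
    show c⁻¹ • c • K (x n) = K (x n)
    rw [smul_smul, inv_mul_cancel₀ hc0, one_smul]
  apply tendsto_of_subseq_tendsto
  intro ns hns
  obtain ⟨w, hwC, ms, hms, hconv⟩ := hC'c.tendsto_subseq (fun k => hmem' (ns k))
  have hw0 : w = 0 := by
    have : ⟪w, w⟫ = (0 : ℂ) := by
      have h1 : Tendsto (fun k => ⟪K (x (ns (ms k))), w⟫) atTop (nhds ⟪w, w⟫) :=
        hconv.inner tendsto_const_nhds
      have h2 : Tendsto (fun k => ⟪K (x (ns (ms k))), w⟫) atTop (nhds (0 : ℂ)) := by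
        have hrw : (fun k => ⟪K (x (ns (ms k))), w⟫)
            = fun k => ⟪x (ns (ms k)), ContinuousLinearMap.adjoint K w⟫ := by
          funext k
          rw [ContinuousLinearMap.adjoint_inner_right]
        rw [hrw]
        exact (hw (ContinuousLinearMap.adjoint K w)).comp
          (hns.comp hms.tendsto_atTop)
      exact tendsto_nhds_unique h1 h2
    exact inner_self_eq_zero.mp this
  exact ⟨ms, by rw [hw0] at hconv; exact hconv⟩

/-- If `T` is an isometry commuting with `A` and `T^n → 0` weakly, then
`W_ess(A) = closure (W(A))` and `‖A‖_ess = ‖A‖`. -/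
theorem essNumericalRange_eq_closure_numericalRange_of_isometry
    (A T : H →L[ℂ] H)
    (hiso : ∀ x y : H, ⟪T x, T y⟫ = ⟪x, y⟫)
    (hcomm : T.comp A = A.comp T)
    (hweak : ∀ φ ψ : H, Tendsto (fun n : ℕ => ⟪(T ^ n) φ, ψ⟫) atTop (nhds (0 : ℂ))) :
    essNumericalRange A = closure (numericalRange A) ∧ essNorm A = ‖A‖ := by
  -- powers of T preserve the inner product
  have hison : ∀ (n : ℕ) (x y : H), ⟪(T ^ n) x, (T ^ n) y⟫ = ⟪x, y⟫ := by
    intro n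
    induction n with
    | zero => simp
    | succ n ih =>
      intro x y
      rw [pow_succ', ContinuousLinearMap.mul_apply, ContinuousLinearMap.mul_apply,
        hiso, ih]
  have hnormn : ∀ (n : ℕ) (x : H), ‖(T ^ n) x‖ = ‖x‖ := by
    intro n x
    rw [norm_eq_sqrt_re_inner (𝕜 := ℂ), norm_eq_sqrt_re_inner (𝕜 := ℂ) x, hison]
  -- powers of T commute with A
  have hcommute : Commute T A := by
    show T * A = A * T
    exact hcomm
  have hcommn : ∀ (n : ℕ) (x : H), (T ^ n) (A x) = A ((T ^ n) x) := by
    intro n x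
    have h := (hcommute.pow_left n)
    calc (T ^ n) (A x) = ((T ^ n) * A) x := rfl
      _ = (A * (T ^ n)) x := by rw [h]
      _ = A ((T ^ n) x) := rfl
  constructor
  · -- numerical range part
    apply Set.Subset.antisymm
    · intro z hz
      have := Set.mem_iInter.mp hz 0
      have := Set.mem_iInter.mp this isCompactOperator_zero
      rwa [add_zero] at this
    · rw [essNumericalRange]
      refine Set.subset_iInter fun K => Set.subset_iInter fun hKc => ?_
      rw [← closure_closure (s := numericalRange (A + K))]
      apply closure_mono
      intro z hz
      obtain ⟨ψ, hψ, hzψ⟩ := hz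
      -- the sequence ψ_n = T^n ψ
      set ψn : ℕ → H := fun n => (T ^ n) ψ with hψn
      have hψnnorm : ∀ n, ‖ψn n‖ = 1 := fun n => by rw [hψn]; rw [hnormn]; exact hψ
      have hAconst : ∀ n, ⟪A (ψn n), ψn n⟫ = z := by
        intro n
        rw [hψn, ← hcommn, hison, ← hzψ]
      -- weakly null and bounded, so K ψn → 0 in norm
      have hKnull : Tendsto (fun n => K (ψn n)) atTop (nhds (0 : H)) := by
        apply compact_apply_tendsto_zero_of_weak_null K hKc ψn
          (fun n => le_of_eq (hψnnorm n))
        intro y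
        exact hweak ψ y
      have htend : Tendsto (fun n => ⟪(A + K) (ψn n), ψn n⟫) atTop (nhds z) := by
        have h1 : (fun n => ⟪(A + K) (ψn n), ψn n⟫)
            = fun n => z + ⟪K (ψn n), ψn n⟫ := by
          funext n
          rw [ContinuousLinearMap.add_apply, inner_add_left, hAconst]
        rw [h1]
        have h2 : Tendsto (fun n => ⟪K (ψn n), ψn n⟫) atTop (nhds (0 : ℂ)) := by
          refine squeeze_zero_norm (fun n => ?_) (tendsto_norm_zero.comp hKnull)
          calc ‖⟪K (ψn n), ψn n⟫‖ ≤ ‖K (ψn n)‖ * ‖ψn n‖ := norm_inner_le_norm _ _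
            _ = ‖K (ψn n)‖ := by rw [hψnnorm, mul_one]
        simpa using (tendsto_const_nhds (x := z)).add h2
      exact mem_closure_of_tendsto htend
        (Eventually.of_forall fun n => ⟨ψn n, hψnnorm n, rfl⟩)
  · -- norm part
    have hmemset : ‖A‖ ∈ {r : ℝ | ∃ K : H →L[ℂ] H, IsCompactOperator ⇑K ∧ r = ‖A - K‖} :=
      ⟨0, isCompactOperator_zero, by rw [sub_zero]⟩
    have hlb : ∀ r ∈ {r : ℝ | ∃ K : H →L[ℂ] H, IsCompactOperator ⇑K ∧ r = ‖A - K‖},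
        ‖A‖ ≤ r := by
      rintro r ⟨K, hKc, rfl⟩
      apply ContinuousLinearMap.opNorm_le_bound _ (norm_nonneg _)
      intro x
      rcases eq_or_ne x 0 with rfl | hx0
      · simp
      · have hxn : ‖x‖ ≠ 0 := norm_ne_zero_iff.mpr hx0
        set ψ : H := ((‖x‖ : ℂ))⁻¹ • x with hψdef
        have hψ : ‖ψ‖ = 1 := by
          rw [hψdef, norm_smul, norm_inv, Complex.norm_real, Real.norm_eq_abs,
            abs_norm, inv_mul_cancel₀ hxn]
        set ψn : ℕ → H := fun n => (T ^ n) ψ with hψn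
        have hψnnorm : ∀ n, ‖ψn n‖ = 1 := fun n => by rw [hψn]; rw [hnormn]; exact hψ
        have hKnull : Tendsto (fun n => K (ψn n)) atTop (nhds (0 : H)) := by
          apply compact_apply_tendsto_zero_of_weak_null K hKc ψn
            (fun n => le_of_eq (hψnnorm n))
          intro y
          exact hweak ψ y
        -- ‖A ψ‖ ≤ ‖A - K‖
        have key : ‖A ψ‖ ≤ ‖A - K‖ := by
          have hlim : Tendsto (fun n => ‖A ψ‖ - ‖K (ψn n)‖) atTop (nhds (‖A ψ‖)) := by
            have := (tendsto_norm_zero.comp hKnull)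
            simpa using (tendsto_const_nhds (x := ‖A ψ‖)).sub this
          apply le_of_tendsto hlim
          apply Eventually.of_forall
          intro n
          have h1 : ‖(A - K) (ψn n)‖ ≤ ‖A - K‖ := by
            calc ‖(A - K) (ψn n)‖ ≤ ‖A - K‖ * ‖ψn n‖ := (A - K).le_opNorm _
              _ = ‖A - K‖ := by rw [hψnnorm, mul_one]
          have h2 : ‖A (ψn n)‖ - ‖K (ψn n)‖ ≤ ‖(A - K) (ψn n)‖ := by
            have : (A - K) (ψn n) = A (ψn n) - K (ψn n) := rfl
            rw [this]
            exact norm_sub_norm_le _ _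
          have h3 : ‖A (ψn n)‖ = ‖A ψ‖ := by
            rw [hψn, ← hcommn, hnormn]
          linarith
        have hAx : ‖A x‖ = ‖x‖ * ‖A ψ‖ := by
          rw [hψdef, map_smul, norm_smul, norm_inv, Complex.norm_real,
            Real.norm_eq_abs, abs_norm]
          field_simp
        rw [hAx, mul_comm]
        exact mul_le_mul_of_nonneg_right key (norm_nonneg _)
    rw [essNorm]
    apply le_antisymm
    · exact csInf_le ⟨‖A‖, hlb⟩ hmemset
    · exact le_csInf ⟨‖A‖, hmemset⟩ hlb
end

section
/- For every integer ν ≥ 1 the characteristic polynomial of B_N satisfies: det(λI_N − B_N) = (λ² − 1)^ν if N = 2ν, and det(λI_N − B_N) = λ(λ² − 1)^ν if N = 2ν + 1. Consequently, for N ≥ 2 the spectrum (set of eigenvalues) of B_N is {−1, 1} if N is even, and {−1, 0, 1} if N is odd. -/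
/-!
Subtracting from each row of `l • 1 - B_{n+1}` the next one, and then replacing each column by the
sum of the columns up to it, are unimodular operations that make the matrix lower triangular:
row `i < n` becomes `(l - (-1)^i) e_i`, and the last diagonal entry is the last row sum
`l + ∑_{k<n} (-1)^k`. Hence `det (l • 1 - B_{n+1}) = (l + ∑_{k<n} (-1)^k) ∏_{i<n} (l - (-1)^i)`,
where consecutive factors pair up to `l² - 1`.
-/

open Matrix

/-- The `N × N` real matrix `B_N` with entries `(B_N)_{jm} = (−1)^{m+1} sign(m − j)`,
for 1-based indices `j, m ∈ {1, …, N}` (here realised with 0-based `Fin N` indices). -/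
noncomputable def matB (N : ℕ) : Matrix (Fin N) (Fin N) ℝ := fun j m =>
  (-1 : ℝ) ^ (((m : ℕ) + 1) + 1) *
    Real.sign ((((m : ℕ) + 1 : ℕ) : ℝ) - (((j : ℕ) + 1 : ℕ) : ℝ))

open Finset

def rowDiffMatrix (R : Type*) [Ring R] (n : ℕ) : Matrix (Fin n) (Fin n) R :=
  1 - of fun i k : Fin n => if (k : ℕ) = i + 1 then 1 else 0

def upperOnesMatrix (R : Type*) [Zero R] [One R] (n : ℕ) : Matrix (Fin n) (Fin n) R :=
  of fun k m : Fin n => if k ≤ m then 1 else 0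

section RowColumnOperations

variable {R : Type*} {n : ℕ}

theorem det_rowDiffMatrix [CommRing R] : (rowDiffMatrix R n).det = 1 := by
  rw [det_of_isUpperTriangular]
  · simp [rowDiffMatrix]
  · intro i k (hki : k < i)
    simp [rowDiffMatrix, one_apply, hki.ne', show (k : ℕ) ≠ i + 1 by omega]

theorem det_upperOnesMatrix [CommRing R] : (upperOnesMatrix R n).det = 1 := by
  rw [det_of_isUpperTriangular]
  · simp [upperOnesMatrix]
  · intro k m (hmk : m < k)
    simp [upperOnesMatrix, not_le.2 hmk]

theorem rowDiffMatrix_mul_apply_castSucc [Ring R] (A : Matrix (Fin (n + 1)) (Fin (n + 1)) R)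
    (i : Fin n) (m : Fin (n + 1)) :
    (rowDiffMatrix R (n + 1) * A) i.castSucc m = A i.castSucc m - A i.succ m := by
  have hsucc (k : Fin (n + 1)) : (k : ℕ) = i + 1 ↔ k = i.succ := by simp [Fin.ext_iff]
  rw [rowDiffMatrix, sub_mul, one_mul, Matrix.sub_apply, mul_apply]
  simp [hsucc]

theorem rowDiffMatrix_mul_apply_last [Ring R] (A : Matrix (Fin (n + 1)) (Fin (n + 1)) R)
    (m : Fin (n + 1)) :
    (rowDiffMatrix R (n + 1) * A) (Fin.last n) m = A (Fin.last n) m := by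
  have hlast (k : Fin (n + 1)) : (k : ℕ) ≠ n + 1 := k.isLt.ne
  rw [rowDiffMatrix, sub_mul, one_mul, Matrix.sub_apply, mul_apply]
  simp [hlast]

theorem mul_upperOnesMatrix_apply [NonAssocSemiring R] (A : Matrix (Fin n) (Fin n) R) (i m : Fin n) :
    (A * upperOnesMatrix R n) i m = ∑ k ∈ Iic m, A i k := by
  simp only [upperOnesMatrix, mul_apply, of_apply, mul_ite, mul_one, mul_zero]
  rw [← sum_filter, filter_ge_eq_Iic]

end RowColumnOperations

theorem Matrix.mem_spectrum_iff_det_smul_one_sub_eq_zero {K ι : Type*} [Field K] [Fintype ι]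
    [DecidableEq ι] (A : Matrix ι ι K) (l : K) : l ∈ spectrum K A ↔ (l • 1 - A).det = 0 := by
  rw [spectrum.mem_iff, Algebra.algebraMap_eq_smul_one, isUnit_iff_isUnit_det, isUnit_iff_ne_zero,
    not_not]

theorem prod_fin_two_mul_sub_neg_one_pow {R : Type*} [CommRing R] (x : R) (ν : ℕ) :
    ∏ i : Fin (2 * ν), (x - (-1) ^ (i : ℕ)) = (x ^ 2 - 1) ^ ν := by
  rw [Fin.prod_univ_eq_prod_range (fun i => x - (-1) ^ i)]
  induction ν with
  | zero => simp
  | succ ν ih =>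
    rw [Nat.mul_succ, prod_range_succ, prod_range_succ, ih, pow_succ (-1 : R),
      (even_two_mul ν).neg_one_pow]
    ring

theorem matB_apply {N : ℕ} (j m : Fin N) :
    matB N j m = (-1) ^ (m : ℕ) * if j < m then 1 else if m < j then -1 else 0 := by
  have hsign : Real.sign (((m + 1 : ℕ) : ℝ) - ((j + 1 : ℕ) : ℝ)) =
      if j < m then 1 else if m < j then -1 else 0 := by
    rcases lt_trichotomy j m with h | rfl | h
    · have : ((j : ℕ) : ℝ) < m := by exact_mod_cast h
      simp [h, Real.sign_of_pos, this]
    · simp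
    · have : ((m : ℕ) : ℝ) < j := by exact_mod_cast h
      simp [h, h.not_gt, Real.sign_of_neg, this]
  simp only [matB, hsign, pow_succ]
  ring

noncomputable def matBReduced (n : ℕ) (l : ℝ) : Matrix (Fin (n + 1)) (Fin (n + 1)) ℝ :=
  rowDiffMatrix ℝ (n + 1) * (l • 1 - matB (n + 1)) * upperOnesMatrix ℝ (n + 1)

section Reduction

variable {n : ℕ}

theorem smul_one_sub_matB_castSucc_sub_succ (l : ℝ) (i : Fin n) (m : Fin (n + 1)) :
    (l • 1 - matB (n + 1)) i.castSucc m - (l • 1 - matB (n + 1)) i.succ m =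
      (l - (-1) ^ (i : ℕ)) * ((if m = i.castSucc then 1 else 0) - if m = i.succ then 1 else 0) := by
  have hi : i.castSucc < i.succ := Fin.castSucc_lt_succ
  rcases lt_trichotomy m i.castSucc with h | rfl | h
  · have h' : m < i.succ := h.trans hi
    simp [matB_apply, one_apply, h, h', h.ne, h'.ne, h.ne', h'.ne', h.not_gt, h'.not_gt]
  · simp [matB_apply, one_apply, hi, hi.ne, hi.ne', hi.not_gt]
  · rcases (Fin.castSucc_lt_iff_succ_le.1 h).eq_or_lt with rfl | h'
    · simp [matB_apply, one_apply, hi, hi.ne, hi.ne', pow_succ]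
    · simp [matB_apply, one_apply, h, h', h.ne, h'.ne, h.ne', h'.ne']

theorem sum_smul_one_sub_matB_last (l : ℝ) :
    ∑ k, (l • 1 - matB (n + 1)) (Fin.last n) k = l + if Even n then 0 else 1 := by
  have hlast (k : Fin n) : ¬ Fin.last n < k.castSucc := (Fin.castSucc_lt_last k).not_gt
  simp [Fin.sum_univ_castSucc, matB_apply, one_apply, Fin.castSucc_lt_last, hlast,
    Fin.sum_neg_one_pow]

theorem det_matBReduced (l : ℝ) : (matBReduced n l).det = (l • 1 - matB (n + 1)).det := by
  simp [matBReduced, det_rowDiffMatrix, det_upperOnesMatrix]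

theorem matBReduced_castSucc_apply (l : ℝ) (i : Fin n) (m : Fin (n + 1)) :
    matBReduced n l i.castSucc m = if m = i.castSucc then l - (-1) ^ (i : ℕ) else 0 := by
  simp only [matBReduced, mul_upperOnesMatrix_apply, rowDiffMatrix_mul_apply_castSucc,
    smul_one_sub_matB_castSucc_sub_succ, ← mul_sum, sum_sub_distrib, sum_ite_eq', mem_Iic,
    ← Fin.castSucc_lt_iff_succ_le]
  split_ifs <;> first | (exfalso; omega) | ring

theorem matBReduced_last_last (l : ℝ) :
    matBReduced n l (Fin.last n) (Fin.last n) = l + if Even n then 0 else 1 := by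
  have hIic : Iic (Fin.last n) = univ := by ext; simp [Fin.le_last]
  rw [matBReduced, mul_upperOnesMatrix_apply, hIic]
  simp only [rowDiffMatrix_mul_apply_last, sum_smul_one_sub_matB_last]

theorem isLowerTriangular_matBReduced (l : ℝ) : (matBReduced n l).IsLowerTriangular := by
  intro i m (him : i < m)
  obtain ⟨i, rfl⟩ := Fin.exists_castSucc_eq.2 (him.trans_le (Fin.le_last m)).ne
  simp [matBReduced_castSucc_apply, him.ne']

theorem det_smul_one_sub_matB_succ (l : ℝ) :
    (l • 1 - matB (n + 1)).det =
      (l + if Even n then 0 else 1) * ∏ i : Fin n, (l - (-1) ^ (i : ℕ)) := by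
  rw [← det_matBReduced, det_of_isLowerTriangular _ (isLowerTriangular_matBReduced l),
    Fin.prod_univ_castSucc, matBReduced_last_last, mul_comm]
  simp [matBReduced_castSucc_apply]

end Reduction

theorem det_smul_one_sub_matB_two_mul (ν : ℕ) (l : ℝ) :
    (l • 1 - matB (2 * ν)).det = (l ^ 2 - 1) ^ ν := by
  cases ν with
  | zero => simp
  | succ ν =>
    change (l • 1 - matB ((2 * ν + 1) + 1)).det = _
    simp only [det_smul_one_sub_matB_succ, Fin.prod_univ_castSucc, Fin.val_castSucc,
      prod_fin_two_mul_sub_neg_one_pow, Fin.val_last, (even_two_mul ν).neg_one_pow,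
      if_neg (Nat.not_even_two_mul_add_one ν)]
    ring

theorem det_smul_one_sub_matB_two_mul_add_one (ν : ℕ) (l : ℝ) :
    (l • 1 - matB (2 * ν + 1)).det = l * (l ^ 2 - 1) ^ ν := by
  simp [det_smul_one_sub_matB_succ, prod_fin_two_mul_sub_neg_one_pow]

/-- The characteristic polynomial of `B_N` is `(λ² − 1)^ν` for `N = 2ν` and
`λ(λ² − 1)^ν` for `N = 2ν + 1`; consequently the spectrum of `B_N` is `{−1, 1}` for
even `N ≥ 2` and `{−1, 0, 1}` for odd `N ≥ 3`. -/
theorem matB_charpoly_and_spectrum (ν : ℕ) (hν : 1 ≤ ν) :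
    (∀ l : ℝ,
      (l • (1 : Matrix (Fin (2 * ν)) (Fin (2 * ν)) ℝ) - matB (2 * ν)).det =
        (l ^ 2 - 1) ^ ν) ∧
    (∀ l : ℝ,
      (l • (1 : Matrix (Fin (2 * ν + 1)) (Fin (2 * ν + 1)) ℝ) - matB (2 * ν + 1)).det =
        l * (l ^ 2 - 1) ^ ν) ∧
    spectrum ℝ (matB (2 * ν)) = {-1, 1} ∧
    spectrum ℝ (matB (2 * ν + 1)) = {-1, 0, 1} := by
  refine ⟨det_smul_one_sub_matB_two_mul ν, det_smul_one_sub_matB_two_mul_add_one ν, ?_, ?_⟩ <;>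
    ext l <;>
    simp [mem_spectrum_iff_det_smul_one_sub_eq_zero, det_smul_one_sub_matB_two_mul,
      det_smul_one_sub_matB_two_mul_add_one, pow_eq_zero_iff (by omega : ν ≠ 0), sub_eq_zero] <;>
    tauto
end

section
/- Let N ≥ 3 be odd, e₀ ≥ 1, and let C_N ∈ ℝ^{N×N} be defined by (C_N)_{jm} = (B_N)_{jm} e_{jm} with 0 < e_{jm} ≤ e₀ for all 1 ≤ j, m ≤ N. Suppose ε > 0 and |e_{jm} − 1| ≤ ε/(N − 1) for all 1 ≤ j, m ≤ N. Then {z ∈ ℂ : |z| ≤ √((N−1)/2) − ε} ⊆ W(C_N) and [ε − √((N+1)/2), √((N+1)/2) − ε] ⊆ W(C_N), where the interval is regarded as a subset of the real axis in ℂ. -/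
/-!
`W(M)` is convex (Toeplitz–Hausdorff) and closed, so it contains the disc of radius `r` as soon as
its support value in every unit direction `u` is at least `r`. After an affine change, convexity
says that `0, 1 ∈ W(A)` force `[0, 1] ⊆ W(A)`: turning the phase of the unit vector with value `1`
makes the form real on the real span of the two vectors, and the intermediate value theorem applies.

Write `N = 2k + 1` and, with indices from `0`, `B_N = S diag((-1)^m)`, where `S_{jm} = sign(m - j)`
is skew-symmetric. If `x̄ = a + b` and `diag((-1)^m) x = a - b`, skewness gives
`x* B_N x = -2 aᵀ S b`. For the vector with entry `2r - k + iγ` at the even place `2r` and `β` at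
the odd places this is `2P(β - iγ)`, where `P = k(k+1)(k+2)/3`, while `‖x‖² = P + kβ² + (k+1)γ²`.
Taking `β - iγ = ρu` yields a point of `W(B_N)` with support value `≥ ρ` in direction `u` whenever
`ρ²(k + (Im u)²) ≤ P`: this allows `ρ = √k` in every direction and `ρ = √(k+1)` for `u = ±1`, where
the vector is real. Since the diagonal of `B_N` vanishes, replacing `B_N` by `C_N` moves the
Rayleigh quotient by at most `(N - 1) max |e_{jm} - 1| ≤ ε`.
-/

open Complex Matrix

/-- The matrix `C_N` with entries `(C_N)_{jm} = (B_N)_{jm} e_{jm}`. -/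
noncomputable def matC (N : ℕ) (e : Fin N → Fin N → ℝ) : Matrix (Fin N) (Fin N) ℝ :=
  fun j m => matB N j m * e j m

/-- The numerical range `W(M) = {x* M x : x ∈ ℂ^N, ‖x‖₂ = 1}` of a complex `N × N` matrix,
regarded as an operator on `ℂ^N` with the Euclidean norm. -/
noncomputable def mNumRange {N : ℕ} (M : Matrix (Fin N) (Fin N) ℂ) : Set ℂ :=
  {z | ∃ x : Fin N → ℂ, (∑ i, ‖x i‖ ^ 2) = 1 ∧ z = dotProduct (star x) (M.mulVec x)}

/-- The numerical radius `w(M) = sup {|z| : z ∈ W(M)}`. -/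
noncomputable def mNumRadius {N : ℕ} (M : Matrix (Fin N) (Fin N) ℂ) : ℝ :=
  sSup {r : ℝ | ∃ z ∈ mNumRange M, r = ‖z‖}

/-- The numerical abscissa `w_r(M) = sup {Re z : z ∈ W(M)}`. -/
noncomputable def mNumAbscissa {N : ℕ} (M : Matrix (Fin N) (Fin N) ℂ) : ℝ :=
  sSup {r : ℝ | ∃ z ∈ mNumRange M, r = z.re}

/-- The operator norm `‖M‖₂` of a complex matrix, induced by the Euclidean norm on `ℂ^N`. -/
noncomputable def l2OpNorm {N : ℕ} (M : Matrix (Fin N) (Fin N) ℂ) : ℝ :=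
  ‖Matrix.toEuclideanCLM (𝕜 := ℂ) (n := Fin N) M‖

/-- The Hermitian matrix `M^θ := (e^{iθ} M + e^{−iθ} M*)/2`. -/
noncomputable def mTheta {N : ℕ} (M : Matrix (Fin N) (Fin N) ℂ) (θ : ℝ) :
    Matrix (Fin N) (Fin N) ℂ :=
  (2⁻¹ : ℂ) • (Complex.exp ((θ : ℂ) * Complex.I) • M +
    Complex.exp (-((θ : ℂ) * Complex.I)) • Mᴴ)


open Finset ComplexConjugate

section QuadraticForm

variable {n : Type*} [Fintype n]

theorem star_dotProduct_self_eq_sum_norm_sq (x : n → ℂ) :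
    star x ⬝ᵥ x = ((∑ i, ‖x i‖ ^ 2 : ℝ) : ℂ) := by
  push_cast
  exact sum_congr rfl fun i _ => Complex.conj_mul' (x i)

theorem sum_norm_sq_pos_of_ne_zero {x : n → ℂ} (hx : x ≠ 0) : 0 < ∑ i, ‖x i‖ ^ 2 := by
  obtain ⟨i, hi⟩ := Function.ne_iff.mp hx
  exact sum_pos' (fun j _ => by positivity) ⟨i, mem_univ i, by positivity⟩

theorem quadForm_smul (M : Matrix n n ℂ) (c : ℂ) (x : n → ℂ) :
    star (c • x) ⬝ᵥ M *ᵥ (c • x) = ((‖c‖ ^ 2 : ℝ) : ℂ) * (star x ⬝ᵥ M *ᵥ x) := by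
  rw [star_smul, mulVec_smul, smul_dotProduct, dotProduct_smul, smul_smul, smul_eq_mul,
    Complex.star_def, Complex.conj_mul']
  push_cast; rfl

theorem quadForm_real_smul_add_smul (M : Matrix n n ℂ) (a b : ℝ) (x y : n → ℂ) :
    star ((a : ℂ) • x + (b : ℂ) • y) ⬝ᵥ M *ᵥ ((a : ℂ) • x + (b : ℂ) • y) =
      a ^ 2 * (star x ⬝ᵥ M *ᵥ x) + a * b * (star x ⬝ᵥ M *ᵥ y + star y ⬝ᵥ M *ᵥ x) +
        b ^ 2 * (star y ⬝ᵥ M *ᵥ y) := by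
  simp only [star_add, star_smul, mulVec_add, mulVec_smul, dotProduct_add, add_dotProduct,
    smul_dotProduct, dotProduct_smul, smul_eq_mul, Complex.star_def, Complex.conj_ofReal]
  ring

theorem quadForm_smul_sub_smul_one [DecidableEq n] (M : Matrix n n ℂ) (c z : ℂ) {x : n → ℂ}
    (hx : ∑ i, ‖x i‖ ^ 2 = 1) :
    star x ⬝ᵥ (c • (M - z • 1)) *ᵥ x = c * (star x ⬝ᵥ M *ᵥ x - z) := by
  rw [smul_mulVec, sub_mulVec, smul_mulVec, one_mulVec, dotProduct_smul, dotProduct_sub,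
    dotProduct_smul, star_dotProduct_self_eq_sum_norm_sq, hx]
  simp

theorem quadForm_map_ofReal (M : Matrix n n ℝ) (v : n → ℝ) :
    star (ofReal ∘ v) ⬝ᵥ M.map ofReal *ᵥ (ofReal ∘ v) = ((v ⬝ᵥ M *ᵥ v : ℝ) : ℂ) := by
  rw [show star (ofReal ∘ v) = ofReal ∘ v from funext fun i => Complex.conj_ofReal (v i)]
  simp only [dotProduct, mulVec, map_apply, Function.comp_apply]
  push_cast
  rfl

theorem exists_rotate_quadForm_cross_im_eq_zero (A : Matrix n n ℂ) {x : n → ℂ}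
    (hx : ∑ i, ‖x i‖ ^ 2 = 1) (hqx : star x ⬝ᵥ A *ᵥ x = 1) (y : n → ℂ) :
    ∃ x' : n → ℂ, ∑ i, ‖x' i‖ ^ 2 = 1 ∧ star x' ⬝ᵥ A *ᵥ x' = 1 ∧
      (star x' ⬝ᵥ A *ᵥ y + star y ⬝ᵥ A *ᵥ x').im = 0 := by
  set a := star y ⬝ᵥ A *ᵥ x
  set b := star x ⬝ᵥ A *ᵥ y
  obtain ⟨ω, hω, hωu⟩ := Complex.exists_norm_eq_mul_self (a - conj b)
  refine ⟨ω • x, ?_, ?_, ?_⟩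
  · simpa only [Pi.smul_apply, smul_eq_mul, norm_mul, hω, one_mul] using hx
  · rw [quadForm_smul, hω, hqx]; simp
  · have hcross : star (ω • x) ⬝ᵥ A *ᵥ y + star y ⬝ᵥ A *ᵥ (ω • x) = conj ω * b + ω * a := by
      rw [star_smul, smul_dotProduct, mulVec_smul, dotProduct_smul]; rfl
    have him := congrArg Complex.im hωu
    rw [hcross]
    simp only [Complex.ofReal_im, mul_sub, Complex.sub_im, Complex.mul_im,
      Complex.conj_re, Complex.conj_im, Complex.add_im] at him ⊢
    linarith

theorem real_smul_add_smul_ne_zero (A : Matrix n n ℂ) {x y : n → ℂ}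
    (hqx : star x ⬝ᵥ A *ᵥ x = 1) (hqy : star y ⬝ᵥ A *ᵥ y = 0) (hy : y ≠ 0) (s : ℝ) :
    ((1 - s : ℝ) : ℂ) • x + (s : ℂ) • y ≠ 0 := by
  intro h
  have hxy : ((1 - s : ℝ) : ℂ) • x = ((-s : ℝ) : ℂ) • y := by
    rw [eq_neg_of_add_eq_zero_left h]; push_cast; rw [neg_smul]
  have hq := congrArg (fun v => star v ⬝ᵥ A *ᵥ v) hxy
  simp only [quadForm_smul, hqx, hqy, mul_zero, mul_one, Complex.ofReal_eq_zero,
    Complex.norm_real, Real.norm_eq_abs, sq_eq_zero_iff, abs_eq_zero, sub_eq_zero] at hq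
  subst hq
  exact hy (by simpa using h)

theorem norm_quadForm_le_of_diag_eq_zero [DecidableEq n] {E : Matrix n n ℂ} {δ : ℝ} (hδ : 0 ≤ δ)
    (hdiag : ∀ i, E i i = 0) (hE : ∀ i j, ‖E i j‖ ≤ δ) (x : n → ℂ) :
    ‖star x ⬝ᵥ E *ᵥ x‖ ≤ δ * (Fintype.card n - 1) * ∑ i, ‖x i‖ ^ 2 := by
  have hterm : ∀ i j, ‖star (x i) * (E i j * x j)‖ ≤
      δ * (‖x i‖ * ‖x j‖) - if i = j then δ * ‖x i‖ ^ 2 else 0 := by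
    intro i j
    rw [norm_mul, norm_mul, norm_star]
    split_ifs with hij
    · subst hij; simp [hdiag, sq]
    · nlinarith [hE i j, mul_nonneg (norm_nonneg (x i)) (norm_nonneg (x j))]
  have hCS : (∑ i, ‖x i‖) ^ 2 ≤ Fintype.card n * ∑ i, ‖x i‖ ^ 2 := sq_sum_le_card_mul_sum_sq
  calc ‖star x ⬝ᵥ E *ᵥ x‖
      ≤ ∑ i, ∑ j, (δ * (‖x i‖ * ‖x j‖) - if i = j then δ * ‖x i‖ ^ 2 else 0) := by
        refine (norm_sum_le _ _).trans (sum_le_sum fun i _ => ?_)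
        rw [mulVec, dotProduct, mul_sum]
        exact (norm_sum_le _ _).trans (sum_le_sum fun j _ => hterm i j)
    _ = δ * ((∑ i, ‖x i‖) ^ 2 - ∑ i, ‖x i‖ ^ 2) := by
        simp only [sum_sub_distrib, sum_ite_eq, mem_univ, if_true, ← mul_sum, sq, sum_mul_sum]
        ring
    _ ≤ δ * (Fintype.card n - 1) * ∑ i, ‖x i‖ ^ 2 := by nlinarith

end QuadraticForm

theorem dotProduct_mulVec_of_transpose_eq_neg {R n : Type*} [CommRing R] [Fintype n]
    {A : Matrix n n R} (hA : Aᵀ = -A) (a b : n → R) : b ⬝ᵥ A *ᵥ a = -(a ⬝ᵥ A *ᵥ b) := by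
  rw [dotProduct_mulVec, dotProduct_comm, ← mulVec_transpose, hA, neg_mulVec, dotProduct_neg]

theorem add_dotProduct_mulVec_sub_of_transpose_eq_neg {R n : Type*} [CommRing R]
    [NoZeroDivisors R] [CharZero R] [Fintype n] {A : Matrix n n R} (hA : Aᵀ = -A) (a b : n → R) :
    (a + b) ⬝ᵥ A *ᵥ (a - b) = -2 * (a ⬝ᵥ A *ᵥ b) := by
  have hself : ∀ v : n → R, v ⬝ᵥ A *ᵥ v = 0 := fun v =>
    self_eq_neg.mp (dotProduct_mulVec_of_transpose_eq_neg hA v v)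
  rw [add_dotProduct, mulVec_sub, dotProduct_sub, dotProduct_sub, hself, hself,
    dotProduct_mulVec_of_transpose_eq_neg hA a b]
  ring

section NumericalRange

variable {N : ℕ}

theorem quadForm_div_mem_mNumRange (M : Matrix (Fin N) (Fin N) ℂ) {x : Fin N → ℂ} (hx : x ≠ 0) :
    (star x ⬝ᵥ M *ᵥ x) / ((∑ i, ‖x i‖ ^ 2 : ℝ) : ℂ) ∈ mNumRange M := by
  set S : ℝ := ∑ i, ‖x i‖ ^ 2
  have hS : 0 < S := sum_norm_sq_pos_of_ne_zero hx
  have hc : ‖((Real.sqrt S)⁻¹ : ℂ)‖ ^ 2 = S⁻¹ := by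
    rw [norm_inv, Complex.norm_real, Real.norm_of_nonneg (Real.sqrt_nonneg S), inv_pow,
      Real.sq_sqrt hS.le]
  refine ⟨((Real.sqrt S)⁻¹ : ℂ) • x, ?_, ?_⟩
  · simp only [Pi.smul_apply, smul_eq_mul, norm_mul, mul_pow, ← mul_sum, hc]
    exact inv_mul_cancel₀ hS.ne'
  · rw [quadForm_smul, hc, div_eq_inv_mul, Complex.ofReal_inv]

theorem mul_sub_mem_mNumRange_iff (M : Matrix (Fin N) (Fin N) ℂ) {c : ℂ} (hc : c ≠ 0)
    (z w : ℂ) : c * (w - z) ∈ mNumRange (c • (M - z • 1)) ↔ w ∈ mNumRange M := by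
  refine exists_congr fun x => and_congr_right fun hx => ?_
  rw [quadForm_smul_sub_smul_one M c z hx, mul_right_inj' hc, sub_left_inj]

theorem ofReal_mem_mNumRange_of_one_mem_of_zero_mem {A : Matrix (Fin N) (Fin N) ℂ}
    (h₁ : 1 ∈ mNumRange A) (h₀ : 0 ∈ mNumRange A) {t : ℝ} (ht : t ∈ Set.Icc 0 1) :
    (t : ℂ) ∈ mNumRange A := by
  obtain ⟨y, hy, hqy⟩ := h₀
  obtain ⟨x₀, hx₀, hqx₀⟩ := h₁
  obtain ⟨x, hx, hqx, hcross⟩ := exists_rotate_quadForm_cross_im_eq_zero A hx₀ hqx₀.symm y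
  set c := (star x ⬝ᵥ A *ᵥ y + star y ⬝ᵥ A *ᵥ x).re
  have hc : star x ⬝ᵥ A *ᵥ y + star y ⬝ᵥ A *ᵥ x = (c : ℂ) :=
    Complex.ext (by simp [c]) (by simp [hcross])
  set v : ℝ → Fin N → ℂ := fun s => ((1 - s : ℝ) : ℂ) • x + (s : ℂ) • y
  have hqv : ∀ s, star (v s) ⬝ᵥ A *ᵥ v s = (((1 - s) ^ 2 + (1 - s) * s * c : ℝ) : ℂ) := by
    intro s
    rw [quadForm_real_smul_add_smul, hqx, ← hqy, hc]
    push_cast; ring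
  set F : ℝ → ℝ := fun s => (1 - s) ^ 2 + (1 - s) * s * c - t * ∑ i, ‖v s i‖ ^ 2
  have hF : ContinuousOn F (Set.Icc 0 1) := by fun_prop
  have hF01 : (0 : ℝ) ∈ Set.Icc (F 1) (F 0) := by
    simp [F, v, hx, hy, ht.1, ht.2]
  obtain ⟨s, -, hs⟩ := intermediate_value_Icc' zero_le_one hF hF01
  have hvs : v s ≠ 0 := real_smul_add_smul_ne_zero A hqx hqy.symm (by rintro rfl; simp at hy) s
  have hmem := quadForm_div_mem_mNumRange A hvs
  have hS : ((∑ i, ‖v s i‖ ^ 2 : ℝ) : ℂ) ≠ 0 := by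
    exact_mod_cast (sum_norm_sq_pos_of_ne_zero hvs).ne'
  rwa [hqv, show (1 - s) ^ 2 + (1 - s) * s * c = t * ∑ i, ‖v s i‖ ^ 2 by linarith [hs],
    Complex.ofReal_mul, mul_div_cancel_right₀ _ hS] at hmem

theorem convex_mNumRange (M : Matrix (Fin N) (Fin N) ℂ) : Convex ℝ (mNumRange M) := by
  intro z₁ hz₁ z₂ hz₂ a b ha hb hab
  rcases eq_or_ne z₁ z₂ with rfl | hz
  · rwa [← add_smul, hab, one_smul]
  have hz' : z₁ - z₂ ≠ 0 := sub_ne_zero.mpr hz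
  have hc : (z₁ - z₂)⁻¹ ≠ 0 := inv_ne_zero hz'
  have h₁ : (1 : ℂ) ∈ mNumRange ((z₁ - z₂)⁻¹ • (M - z₂ • 1)) := by
    rw [← inv_mul_cancel₀ hz']
    exact (mul_sub_mem_mNumRange_iff M hc z₂ z₁).mpr hz₁
  have h₀ : (0 : ℂ) ∈ mNumRange ((z₁ - z₂)⁻¹ • (M - z₂ • 1)) := by
    rw [← mul_zero (z₁ - z₂)⁻¹, ← sub_self z₂]
    exact (mul_sub_mem_mNumRange_iff M hc z₂ z₂).mpr hz₂
  have ha' := ofReal_mem_mNumRange_of_one_mem_of_zero_mem h₁ h₀ ⟨ha, by linarith⟩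
  obtain rfl : b = 1 - a := by linarith
  rw [show (a : ℂ) = (z₁ - z₂)⁻¹ * (a • z₁ + (1 - a) • z₂ - z₂) by
    rw [Complex.real_smul, Complex.real_smul]
    field_simp; push_cast; ring] at ha'
  exact (mul_sub_mem_mNumRange_iff M hc z₂ _).mp ha'

theorem isClosed_mNumRange (M : Matrix (Fin N) (Fin N) ℂ) : IsClosed (mNumRange M) := by
  set K := {x : Fin N → ℂ | ∑ i, ‖x i‖ ^ 2 = 1}
  have hK : IsCompact K := by
    refine Metric.isCompact_of_isClosed_isBounded (isClosed_eq (by fun_prop) continuous_const)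
      ((Metric.isBounded_closedBall (x := 0) (r := 1)).subset fun x hx => ?_)
    rw [mem_closedBall_zero_iff, pi_norm_le_iff_of_nonneg zero_le_one]
    intro i
    have hi : ‖x i‖ ^ 2 ≤ 1 := hx ▸ single_le_sum (fun j _ => sq_nonneg ‖x j‖) (mem_univ i)
    exact (sq_le_one_iff₀ (norm_nonneg _)).mp hi
  have hW : mNumRange M = (fun x => star x ⬝ᵥ M *ᵥ x) '' K := by
    ext z; simp [mNumRange, K, eq_comm]
  rw [hW]
  exact (hK.image (by fun_prop)).isClosed

end NumericalRange

theorem sub_le_re_conj_mul_of_norm_sub_le {u q : ℂ} (hu : ‖u‖ = 1) {c d : ℝ}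
    (h : ‖q - c * u‖ ≤ d) : c - d ≤ (conj u * q).re := by
  have hsplit : conj u * q = c + conj u * (q - c * u) := by
    rw [mul_sub, mul_left_comm, Complex.conj_mul', hu]; push_cast; ring
  have hre := Complex.abs_re_le_norm (conj u * (q - c * u))
  rw [norm_mul, Complex.norm_conj, hu, one_mul] at hre
  rw [hsplit, Complex.add_re, Complex.ofReal_re]
  linarith [neg_abs_le (conj u * (q - c * u)).re]

theorem closedBall_subset_of_forall_exists_re_ge {S : Set ℂ} (hconv : Convex ℝ S)
    (hclosed : IsClosed S) {r : ℝ} (hS : ∀ u : ℂ, ‖u‖ = 1 → ∃ w ∈ S, r ≤ (conj u * w).re) :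
    Metric.closedBall 0 r ⊆ S := by
  intro z hz
  rw [← RCLike.iInter_halfSpaces_eq (𝕜 := ℂ) hconv hclosed, Set.mem_iInter]
  intro l
  set ζ := l 1
  obtain ⟨u, hu, hζ⟩ := Complex.exists_norm_eq_mul_self ζ
  obtain ⟨w, hw, hrw⟩ := hS u hu
  have hconj : conj u * ‖ζ‖ = ζ := by
    rw [hζ, ← mul_assoc, Complex.conj_mul', hu]; simp
  have hre : ∀ v, RCLike.re (l v) = ‖ζ‖ * (conj u * v).re := fun v => by
    have hlv : l v = v * ζ := by simpa using l.map_smul v 1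
    rw [RCLike.re_to_complex, ← Complex.re_ofReal_mul]
    congr 1
    linear_combination hlv - v * hconj
  refine ⟨w, hw, ?_⟩
  rw [hre, hre]
  refine mul_le_mul_of_nonneg_left ?_ (norm_nonneg _)
  calc (conj u * z).re ≤ ‖conj u * z‖ := Complex.re_le_norm _
    _ = ‖z‖ := by rw [norm_mul, Complex.norm_conj, hu, one_mul]
    _ ≤ r := mem_closedBall_zero_iff.mp hz
    _ ≤ _ := hrw

theorem ofReal_image_Icc_subset {S : Set ℂ} (hS : Convex ℝ S) {a b : ℝ} (ha : (a : ℂ) ∈ S)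
    (hb : (b : ℂ) ∈ S) : ofReal '' Set.Icc a b ⊆ S := by
  rintro _ ⟨t, ht, rfl⟩
  exact ((hS.linear_preimage Complex.ofRealCLM.toLinearMap).ordConnected.out ha hb) ht

theorem sum_range_two_mul_add_one {M : Type*} [AddCommMonoid M] (f : ℕ → M) (k : ℕ) :
    ∑ n ∈ range (2 * k + 1), f n =
      ∑ r ∈ range (k + 1), f (2 * r) + ∑ r ∈ range k, f (2 * r + 1) := by
  induction k with
  | zero => simp
  | succ k ih =>
    rw [show 2 * (k + 1) + 1 = 2 * k + 1 + 1 + 1 by ring, sum_range_succ, sum_range_succ, ih,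
      sum_range_succ (fun r => f (2 * r)) (k + 1), sum_range_succ (fun r => f (2 * r + 1)) k,
      show 2 * (k + 1) = 2 * k + 1 + 1 by ring]
    abel

theorem sum_range_sq_two_mul_sub (c : ℝ) (M : ℕ) :
    ∑ r ∈ range M, (2 * (r : ℝ) - c) ^ 2 =
      2 * M * (M - 1) * (2 * M - 1) / 3 - 2 * c * M * (M - 1) + M * c ^ 2 := by
  induction M with
  | zero => simp
  | succ M ih => rw [sum_range_succ, ih]; push_cast; ring

theorem sum_range_sign_two_mul_sub {r k : ℕ} (hr : r ≤ k) :
    ∑ s ∈ range (k + 1), Real.sign (2 * s - 2 * r : ℝ) = k - 2 * r := by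
  induction k, hr using Nat.le_induction with
  | base =>
    rw [sum_range_succ, sum_congr rfl fun s hs => Real.sign_of_neg (by
      have : (s : ℝ) < r := by exact_mod_cast mem_range.mp hs
      linarith)]
    simp only [sum_neg_distrib, sum_const, card_range, nsmul_eq_mul, mul_one, sub_self,
      Real.sign_zero, add_zero]
    ring
  | succ k hrk ih =>
    have : (r : ℝ) ≤ k := by exact_mod_cast hrk
    rw [sum_range_succ, ih, Real.sign_of_pos (by push_cast; linarith)]
    push_cast; ring

theorem sum_range_sign_two_mul_add_one_sub {r k : ℕ} (hr : r ≤ k) :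
    ∑ s ∈ range k, Real.sign (2 * s + 1 - 2 * r : ℝ) = k - 2 * r := by
  induction k, hr using Nat.le_induction with
  | base =>
    rw [sum_congr rfl fun s hs => Real.sign_of_neg (by
      have : (s : ℝ) + 1 ≤ r := by exact_mod_cast mem_range.mp hs
      linarith)]
    simp only [sum_neg_distrib, sum_const, card_range, nsmul_eq_mul, mul_one]
    ring
  | succ k hrk ih =>
    have : (r : ℝ) ≤ k := by exact_mod_cast hrk
    rw [sum_range_succ, ih, Real.sign_of_pos (by linarith)]
    push_cast; ring

theorem sum_range_sign_sub_mul_ite {r k : ℕ} (hr : r ≤ k) (p q : ℂ) :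
    ∑ m ∈ range (2 * k + 1), (Real.sign ((m : ℝ) - (2 * r : ℕ)) : ℂ) * (if Even m then p else q) =
      (k - 2 * r) * (p + q) := by
  rw [sum_range_two_mul_add_one]
  simp only [even_two_mul, Nat.not_even_bit1, if_true, if_false, ← sum_mul]
  push_cast
  rw [← Complex.ofReal_sum, ← Complex.ofReal_sum, sum_range_sign_two_mul_sub hr,
    sum_range_sign_two_mul_add_one_sub hr]
  push_cast; ring

noncomputable def signMatrix (N : ℕ) : Matrix (Fin N) (Fin N) ℂ :=
  Matrix.of fun j m => (Real.sign ((m : ℝ) - j) : ℂ)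

theorem signMatrix_transpose (N : ℕ) : (signMatrix N)ᵀ = -signMatrix N := by
  ext j m
  rw [transpose_apply, neg_apply]
  simp only [signMatrix, of_apply]
  rw [← neg_sub, Real.sign_neg, Complex.ofReal_neg]

theorem matB_apply_eq (N : ℕ) (j m : Fin N) :
    matB N j m = (-1) ^ (m : ℕ) * Real.sign ((m : ℝ) - j) := by
  simp [matB, pow_succ]

theorem map_matB_mulVec (N : ℕ) (x : Fin N → ℂ) :
    (matB N).map ofReal *ᵥ x = signMatrix N *ᵥ fun m => (-1) ^ (m : ℕ) * x m := by
  ext j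
  simp only [mulVec, dotProduct, map_apply, matB_apply_eq, signMatrix, of_apply]
  push_cast
  exact sum_congr rfl fun m _ => by ring

noncomputable def testVec (k : ℕ) (β γ : ℝ) (n : ℕ) : ℂ :=
  if Even n then (((n : ℝ) - k : ℝ) : ℂ) + γ * I else β

theorem sum_norm_sq_testVec (k : ℕ) (β γ : ℝ) :
    ∑ n : Fin (2 * k + 1), ‖testVec k β γ n‖ ^ 2 =
      k * (k + 1) * (k + 2) / 3 + k * β ^ 2 + (k + 1) * γ ^ 2 := by
  rw [Fin.sum_univ_eq_sum_range (fun n => ‖testVec k β γ n‖ ^ 2), sum_range_two_mul_add_one]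
  simp only [testVec, even_two_mul, Nat.not_even_bit1, if_true, if_false, Complex.sq_norm,
    Complex.normSq_add_mul_I, Complex.normSq_ofReal, sum_add_distrib]
  push_cast
  rw [sum_range_sq_two_mul_sub]
  simp only [Nat.cast_add, Nat.cast_one, add_sub_cancel_right, sum_const, card_range, nsmul_eq_mul]
  ring

theorem quadForm_matB_testVec (k : ℕ) (β γ : ℝ) :
    star (testVec k β γ ∘ Fin.val) ⬝ᵥ (matB (2 * k + 1)).map ofReal *ᵥ (testVec k β γ ∘ Fin.val) =
      2 * (k * (k + 1) * (k + 2) / 3 : ℝ) * (β - γ * I) := by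
  set a : ℕ → ℂ := fun n => if Even n then (((n : ℝ) - k : ℝ) : ℂ) else 0
  set b : ℕ → ℂ := fun n => if Even n then -(γ * I) else β
  have hstar : star (testVec k β γ ∘ Fin.val) = a ∘ Fin.val + b ∘ Fin.val (n := 2 * k + 1) := by
    ext n
    simp only [Pi.star_apply, Function.comp_apply, Pi.add_apply, testVec, a, b]
    split_ifs <;> simp [Complex.conj_ofReal, sub_eq_add_neg]
  have hsign : (fun m : Fin (2 * k + 1) => (-1) ^ (m : ℕ) * (testVec k β γ ∘ Fin.val) m) =
      a ∘ Fin.val - b ∘ Fin.val := by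
    ext n
    simp only [Function.comp_apply, Pi.sub_apply, testVec, a, b]
    split_ifs with h
    · rw [h.neg_one_pow]; ring
    · rw [(Nat.not_even_iff_odd.mp h).neg_one_pow]; ring
  set g : ℕ → ℂ := fun j =>
    ∑ m ∈ range (2 * k + 1), (Real.sign ((m : ℝ) - j) : ℂ) * b m
  have hSb : signMatrix (2 * k + 1) *ᵥ (b ∘ Fin.val) = g ∘ Fin.val := by
    ext j
    exact Fin.sum_univ_eq_sum_range (fun m => (Real.sign ((m : ℝ) - j) : ℂ) * b m) _
  have hg : ∀ r ∈ range (k + 1), a (2 * r) * g (2 * r) =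
      (((2 * r - k : ℝ) ^ 2 : ℝ) : ℂ) * (γ * I - β) := by
    intro r hr
    simp only [a, g, even_two_mul, if_true]
    rw [sum_range_sign_sub_mul_ite (Nat.lt_succ_iff.mp (mem_range.mp hr))]
    push_cast; ring
  rw [map_matB_mulVec, hstar, hsign,
    add_dotProduct_mulVec_sub_of_transpose_eq_neg (signMatrix_transpose _), hSb]
  simp only [dotProduct, Function.comp_apply]
  rw [Fin.sum_univ_eq_sum_range (fun n => a n * g n), sum_range_two_mul_add_one, sum_congr rfl hg]
  simp only [a, Nat.not_even_bit1, if_false, zero_mul, sum_const_zero, add_zero]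
  rw [← sum_mul, ← Complex.ofReal_sum, sum_range_sq_two_mul_sub]
  push_cast; ring

theorem norm_quadForm_matC_sub_matB_le (N : ℕ) (e : Fin N → Fin N → ℝ) {δ : ℝ} (hδ : 0 ≤ δ)
    (he : ∀ j m, |e j m - 1| ≤ δ) (x : Fin N → ℂ) :
    ‖star x ⬝ᵥ (matC N e).map ofReal *ᵥ x - star x ⬝ᵥ (matB N).map ofReal *ᵥ x‖ ≤
      δ * (N - 1) * ∑ i, ‖x i‖ ^ 2 := by
  have hE : ∀ j m, ((matC N e).map ofReal - (matB N).map ofReal) j m =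
      ((matB N j m * (e j m - 1) : ℝ) : ℂ) := fun j m => by
    simp only [Matrix.sub_apply, map_apply, matC]; push_cast; ring
  have hdiag : ∀ j, ((matC N e).map ofReal - (matB N).map ofReal) j j = 0 := fun j => by
    simp [hE, matB_apply_eq]
  have hbound : ∀ j m, ‖((matC N e).map ofReal - (matB N).map ofReal) j m‖ ≤ δ := fun j m => by
    have hsign : |Real.sign ((m : ℝ) - j)| ≤ 1 := by
      rcases Real.sign_apply_eq ((m : ℝ) - j) with h | h | h <;> simp [h]
    rw [hE, Complex.norm_real, Real.norm_eq_abs, abs_mul, matB_apply_eq, abs_mul, abs_pow,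
      abs_neg, abs_one, one_pow, one_mul]
    exact (mul_le_of_le_one_left (abs_nonneg _) hsign).trans (he j m)
  rw [← dotProduct_sub, ← sub_mulVec]
  simpa using norm_quadForm_le_of_diag_eq_zero hδ hdiag hbound x

theorem exists_mem_mNumRange_matC_re_ge {k : ℕ} (hk : 1 ≤ k)
    (e : Fin (2 * k + 1) → Fin (2 * k + 1) → ℝ) {δ : ℝ} (hδ : 0 ≤ δ)
    (he : ∀ j m, |e j m - 1| ≤ δ) {u : ℂ} (hu : ‖u‖ = 1) {ρ : ℝ} (hρ : 0 ≤ ρ)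
    (hρP : ρ ^ 2 * (k + u.im ^ 2) ≤ k * (k + 1) * (k + 2) / 3) :
    ∃ w ∈ mNumRange ((matC (2 * k + 1) e).map ofReal),
      ρ - 2 * k * δ ≤ (conj u * w).re ∧ (u.im = 0 → w.im = 0) := by
  set P : ℝ := k * (k + 1) * (k + 2) / 3
  set x := testVec k (ρ * u.re) (-(ρ * u.im)) ∘ Fin.val (n := 2 * k + 1)
  set S : ℝ := ∑ i, ‖x i‖ ^ 2
  set q := star x ⬝ᵥ (matC (2 * k + 1) e).map ofReal *ᵥ x
  have hu2 : u.re ^ 2 + u.im ^ 2 = 1 := by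
    have h := Complex.sq_norm u
    rw [hu, Complex.normSq_apply] at h
    linear_combination -h
  have hS : S = P + ρ ^ 2 * (k + u.im ^ 2) := by
    simp only [S, x, Function.comp_apply, sum_norm_sq_testVec]
    linear_combination k * ρ ^ 2 * hu2
  have hSpos : 0 < S := by
    have : (0 : ℝ) < k := by exact_mod_cast hk
    rw [hS]; positivity
  have hqB : star x ⬝ᵥ (matB (2 * k + 1)).map ofReal *ᵥ x = ((2 * P * ρ : ℝ) : ℂ) * u := by
    rw [quadForm_matB_testVec]
    conv_rhs => rw [← Complex.re_add_im u]
    simp only [P]; push_cast; ring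
  have hq : 2 * P * ρ - 2 * k * δ * S ≤ (conj u * q).re := by
    refine sub_le_re_conj_mul_of_norm_sub_le hu ?_
    have := norm_quadForm_matC_sub_matB_le _ e hδ he x
    rw [hqB] at this
    convert this using 2
    push_cast; ring
  refine ⟨q / (S : ℂ), quadForm_div_mem_mNumRange _ fun h => hSpos.ne' (by simp [S, h]), ?_,
    fun him => ?_⟩
  · have hρS : ρ * S ≤ ρ * (2 * P) := mul_le_mul_of_nonneg_left (by linarith) hρ
    rw [← mul_div_assoc, Complex.div_ofReal_re, le_div_iff₀ hSpos]
    linarith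
  · have hxr : x = ofReal ∘ fun n : Fin (2 * k + 1) =>
        if Even (n : ℕ) then (n : ℝ) - k else ρ * u.re := by
      ext n
      simp only [x, Function.comp_apply, testVec, him, mul_zero, neg_zero, Complex.ofReal_zero,
        zero_mul, add_zero]
      split_ifs <;> rfl
    rw [show q = _ from hxr ▸ quadForm_map_ofReal _ _, ← Complex.ofReal_div, Complex.ofReal_im]

theorem mul_add_one_le_mul_add_one_mul_add_two_div_three {k : ℝ} (hk : 1 ≤ k) :
    k * (k + 1) ≤ k * (k + 1) * (k + 2) / 3 := by
  nlinarith [mul_nonneg (mul_nonneg (by linarith : 0 ≤ k) (by linarith : 0 ≤ k + 1))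
    (by linarith : 0 ≤ k - 1)]

theorem closedBall_subset_mNumRange_matC {k : ℕ} (hk : 1 ≤ k)
    (e : Fin (2 * k + 1) → Fin (2 * k + 1) → ℝ) {δ : ℝ} (hδ : 0 ≤ δ)
    (he : ∀ j m, |e j m - 1| ≤ δ) :
    Metric.closedBall 0 (Real.sqrt k - 2 * k * δ) ⊆
      mNumRange ((matC (2 * k + 1) e).map ofReal) := by
  refine closedBall_subset_of_forall_exists_re_ge (convex_mNumRange _) (isClosed_mNumRange _)
    fun u hu => ?_
  have him : u.im ^ 2 ≤ 1 := by
    rw [← sq_abs, ← one_pow 2, ← hu]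
    exact pow_le_pow_left₀ (abs_nonneg _) (Complex.abs_im_le_norm u) 2
  have hρP : Real.sqrt k ^ 2 * (k + u.im ^ 2) ≤ k * (k + 1) * (k + 2) / 3 := by
    rw [Real.sq_sqrt (Nat.cast_nonneg k)]
    nlinarith [mul_add_one_le_mul_add_one_mul_add_two_div_three (k := k) (by exact_mod_cast hk),
      mul_le_mul_of_nonneg_left him (Nat.cast_nonneg (α := ℝ) k)]
  obtain ⟨w, hw, hre, -⟩ :=
    exists_mem_mNumRange_matC_re_ge hk e hδ he hu (Real.sqrt_nonneg k) hρP
  exact ⟨w, hw, hre⟩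

theorem ofReal_image_Icc_subset_mNumRange_matC {k : ℕ} (hk : 1 ≤ k)
    (e : Fin (2 * k + 1) → Fin (2 * k + 1) → ℝ) {δ : ℝ} (hδ : 0 ≤ δ)
    (he : ∀ j m, |e j m - 1| ≤ δ) :
    ofReal '' Set.Icc (2 * k * δ - Real.sqrt (k + 1)) (Real.sqrt (k + 1) - 2 * k * δ) ⊆
      mNumRange ((matC (2 * k + 1) e).map ofReal) := by
  have hρP : Real.sqrt (k + 1) ^ 2 * (k + (0 : ℝ) ^ 2) ≤ k * (k + 1) * (k + 2) / 3 := by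
    rw [Real.sq_sqrt (by positivity)]
    linarith [mul_add_one_le_mul_add_one_mul_add_two_div_three (k := k) (by exact_mod_cast hk)]
  obtain ⟨wpos, hwpos, hrepos, himpos⟩ := exists_mem_mNumRange_matC_re_ge hk e hδ he
    norm_one (Real.sqrt_nonneg _) (by simpa using hρP)
  obtain ⟨wneg, hwneg, hreneg, himneg⟩ := exists_mem_mNumRange_matC_re_ge hk e hδ he
    (u := -1) (by simp) (Real.sqrt_nonneg _) (by simpa using hρP)
  simp only [map_one, one_mul, map_neg, neg_mul, Complex.neg_re] at hrepos hreneg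
  refine (Set.image_mono (Set.Icc_subset_Icc (by linarith) hrepos)).trans
    (ofReal_image_Icc_subset (convex_mNumRange _) ?_ ?_)
  · rwa [show (wneg.re : ℂ) = wneg from Complex.ext rfl (by simp [himneg])]
  · rwa [show (wpos.re : ℂ) = wpos from Complex.ext rfl (by simp [himpos])]

theorem matC_numRange_contains_disc_general (N : ℕ) (hN : 3 ≤ N) (hodd : Odd N)
    (e : Fin N → Fin N → ℝ)
    (ε : ℝ) (hε : 0 < ε)
    (hclose : ∀ j m : Fin N, |e j m - 1| ≤ ε / ((N : ℝ) - 1)) :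
    {z : ℂ | ‖z‖ ≤ Real.sqrt (((N : ℝ) - 1) / 2) - ε} ⊆
      mNumRange ((matC N e).map Complex.ofReal) ∧
    Complex.ofReal '' Set.Icc (ε - Real.sqrt (((N : ℝ) + 1) / 2))
        (Real.sqrt (((N : ℝ) + 1) / 2) - ε) ⊆
      mNumRange ((matC N e).map Complex.ofReal) := by
  obtain ⟨k, rfl⟩ := hodd
  have hk : 1 ≤ k := by omega
  have hN1 : ((2 * k + 1 : ℕ) : ℝ) - 1 = 2 * k := by push_cast; ring
  have hδ : 0 ≤ ε / (((2 * k + 1 : ℕ) : ℝ) - 1) := by rw [hN1]; positivity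
  have hkδ : 2 * k * (ε / (((2 * k + 1 : ℕ) : ℝ) - 1)) = ε := by
    have : (0 : ℝ) < k := by exact_mod_cast hk
    rw [hN1]; field_simp
  rw [show (((2 * k + 1 : ℕ) : ℝ) - 1) / 2 = k by rw [hN1]; ring,
    show (((2 * k + 1 : ℕ) : ℝ) + 1) / 2 = k + 1 by push_cast; ring]
  have hdisc := closedBall_subset_mNumRange_matC hk e hδ hclose
  have hsegment := ofReal_image_Icc_subset_mNumRange_matC hk e hδ hclose
  rw [hkδ] at hdisc hsegment
  exact ⟨fun z hz => hdisc (mem_closedBall_zero_iff.mpr hz), hsegment⟩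

/-- For odd `N ≥ 3`, if `|e_{jm} − 1| ≤ ε/(N−1)` for all `j, m`, then
`{z : |z| ≤ √((N−1)/2) − ε} ⊆ W(C_N)` and
`[ε − √((N+1)/2), √((N+1)/2) − ε] ⊆ W(C_N)`. -/
theorem matC_numRange_contains_disc (N : ℕ) (hN : 3 ≤ N) (hodd : Odd N)
    (e₀ : ℝ) (he₀ : 1 ≤ e₀)
    (e : Fin N → Fin N → ℝ) (he : ∀ j m, 0 < e j m ∧ e j m ≤ e₀)
    (ε : ℝ) (hε : 0 < ε)
    (hclose : ∀ j m : Fin N, |e j m - 1| ≤ ε / ((N : ℝ) - 1)) :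
    {z : ℂ | ‖z‖ ≤ Real.sqrt (((N : ℝ) - 1) / 2) - ε} ⊆
      mNumRange ((matC N e).map Complex.ofReal) ∧
    Complex.ofReal '' Set.Icc (ε - Real.sqrt (((N : ℝ) + 1) / 2))
        (Real.sqrt (((N : ℝ) + 1) / 2) - ε) ⊆
      mNumRange ((matC N e).map Complex.ofReal) :=
  matC_numRange_contains_disc_general N hN hodd e ε hε hclose
end

section
/- Let Γ be a compact metric space equipped with a finite Borel measure μ. Let z ∈ L^∞(Γ, μ), let S be a nonempty index set, and let {f_φ : φ ∈ S} be a subset of C(Γ) that is bounded in the supremum norm. Then sup_{φ ∈ S} esssup_{x ∈ Γ} |z(x) f_φ(x)| = esssup_{x ∈ Γ} (|z(x)| · sup_{φ ∈ S} |f_φ(x)|), where esssup denotes essential supremum with respect to μ. -/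
/-!
The inequality `≤` holds pointwise. For `≥`, the a.e. bounds `‖z x * f φ x‖ ≤ c` can be
combined for all `φ` at once: `C(Γ, ℂ)` is separable, so countably many `f φ` are dense in the
family, and each set `{g | ‖z x * g x‖ ≤ c}` is closed.
-/

open MeasureTheory Filter Set TopologicalSpace

section EssSup

variable {α : Type*} [MeasurableSpace α] {μ : Measure α}

theorem Real.essSup_zero_measure (f : α → ℝ) : essSup f (0 : Measure α) = 0 := by
  rw [essSup, ae_zero, limsup_eq]
  simp only [eventually_bot, ofPred_true]
  exact Real.sInf_of_not_bddBelow not_bddBelow_univ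

theorem MeasureTheory.MemLp.isBoundedUnder_norm_top {E : Type*} [NormedAddCommGroup E]
    {g : α → E} (hg : MemLp g ⊤ μ) : IsBoundedUnder (· ≤ ·) (ae μ) fun x => ‖g x‖ := by
  have hg' := hg.eLpNorm_lt_top
  rw [eLpNorm_exponent_top, eLpNormEssSup_lt_top_iff_isBoundedUnder] at hg'
  obtain ⟨K, hK⟩ := hg'
  exact ⟨K, hK.mono fun x hx => NNReal.coe_le_coe.2 hx⟩

theorem iSup_essSup_eq_essSup_iSup_of_ae_forall_le {S : Type*} [Nonempty S] {u : S → α → ℝ}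
    (hu : ∀ φ x, 0 ≤ u φ x) (hbdd : ∀ x, BddAbove (range fun φ => u φ x))
    (hsup : IsBoundedUnder (· ≤ ·) (ae μ) fun x => ⨆ φ, u φ x)
    (hswap : ∀ c, (∀ φ, ∀ᵐ x ∂μ, u φ x ≤ c) → ∀ᵐ x ∂μ, ∀ φ, u φ x ≤ c) :
    ⨆ φ, essSup (u φ) μ = essSup (fun x => ⨆ φ, u φ x) μ := by
  rcases eq_or_ne μ 0 with rfl | hμ
  · simp only [Real.essSup_zero_measure, ciSup_const]
  have : NeZero μ := ⟨hμ⟩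
  have hle_sup : ∀ φ, u φ ≤ fun x => ⨆ φ, u φ x := fun φ x => le_ciSup (hbdd x) φ
  have hle : ∀ φ, essSup (u φ) μ ≤ essSup (fun x => ⨆ φ, u φ x) μ := fun φ =>
    limsup_le_limsup (.of_forall (hle_sup φ)) (isCoboundedUnder_le_of_le _ (hu φ)) hsup
  refine le_antisymm (ciSup_le hle) (limsup_le_of_le ?_ ?_)
  · exact isCoboundedUnder_le_of_le _ fun x => (hu (Classical.arbitrary S) x).trans (hle_sup _ x)
  · have hM : ∀ᵐ x ∂μ, ∀ φ, u φ x ≤ ⨆ φ, essSup (u φ) μ := hswap _ fun φ =>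
      (ae_le_essSup (hsup.mono_le (.of_forall (hle_sup φ)))).mono fun x hx =>
        hx.trans (le_ciSup ⟨_, forall_mem_range.2 hle⟩ φ)
    exact hM.mono fun x hx => ciSup_le hx

theorem ae_forall_mem_of_isClosed {X S : Type*} [TopologicalSpace X] [SeparableSpace X]
    [PseudoMetrizableSpace X] (g : S → X) {F : α → Set X} (hF : ∀ x, IsClosed (F x))
    (h : ∀ φ, ∀ᵐ x ∂μ, g φ ∈ F x) : ∀ᵐ x ∂μ, ∀ φ, g φ ∈ F x := by
  obtain ⟨t, hts, htc, hst⟩ :=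
    (IsSeparable.of_separableSpace (range g)).exists_countable_dense_subset
  have ht : ∀ᵐ x ∂μ, ∀ y ∈ t, y ∈ F x := (ae_ball_iff htc).2 fun y hy => by
    obtain ⟨φ, rfl⟩ := hts hy
    exact h φ
  filter_upwards [ht] with x hx φ
  exact closure_minimal hx (hF x) (hst (mem_range_self φ))

end EssSup

theorem iSup_essSup_eq_essSup_iSup_general
    {Γ : Type*} [MetricSpace Γ] [CompactSpace Γ] [MeasurableSpace Γ]
    (μ : Measure Γ)
    {S : Type*} [Nonempty S]
    (z : Γ → ℂ) (hz : MemLp z ⊤ μ)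
    (f : S → C(Γ, ℂ)) (C : ℝ) (hf : ∀ φ : S, ‖f φ‖ ≤ C) :
    (⨆ φ : S, essSup (fun x => ‖z x * f φ x‖) μ) =
      essSup (fun x => ‖z x‖ * ⨆ φ : S, ‖f φ x‖) μ := by
  have hfC : ∀ φ x, ‖f φ x‖ ≤ C := fun φ x => ((f φ).norm_coe_le_norm x).trans (hf φ)
  have hmul : ∀ x, ‖z x‖ * ⨆ φ, ‖f φ x‖ = ⨆ φ, ‖z x * f φ x‖ := fun x => by
    simp only [Real.mul_iSup_of_nonneg (norm_nonneg _), norm_mul]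
  have hzfC : ∀ x φ, ‖z x * f φ x‖ ≤ ‖z x‖ * C := fun x φ => by
    rw [norm_mul]
    exact mul_le_mul_of_nonneg_left (hfC φ x) (norm_nonneg _)
  simp only [hmul]
  refine iSup_essSup_eq_essSup_iSup_of_ae_forall_le (fun _ _ => norm_nonneg _)
    (fun x => ⟨‖z x‖ * C, forall_mem_range.2 (hzfC x)⟩) ?_ fun c hc =>
    ae_forall_mem_of_isClosed f (F := fun x => {g | ‖z x * g x‖ ≤ c})
      (fun x => isClosed_le (by fun_prop) continuous_const) hc
  obtain ⟨K, hK⟩ := hz.isBoundedUnder_norm_top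
  refine ⟨K * C, (eventually_map.1 hK).mono fun x hx => ciSup_le fun φ => (hzfC x φ).trans ?_⟩
  exact mul_le_mul_of_nonneg_right hx ((norm_nonneg _).trans (hfC φ x))

/-- On a compact metric space `Γ` with a finite Borel measure `μ`: for `z ∈ L^∞(Γ, μ)` and
a bounded family `(f φ)_{φ ∈ S}` of continuous functions on `Γ`,
`sup_φ esssup_x |z(x) f_φ(x)| = esssup_x (|z(x)| · sup_φ |f_φ(x)|)`. -/
theorem iSup_essSup_eq_essSup_iSup
    {Γ : Type*} [MetricSpace Γ] [CompactSpace Γ] [MeasurableSpace Γ] [BorelSpace Γ]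
    (μ : Measure Γ) [IsFiniteMeasure μ]
    {S : Type*} [Nonempty S]
    (z : Γ → ℂ) (hz : MemLp z ⊤ μ)
    (f : S → C(Γ, ℂ)) (C : ℝ) (hf : ∀ φ : S, ‖f φ‖ ≤ C) :
    (⨆ φ : S, essSup (fun x => ‖z x * f φ x‖) μ) =
      essSup (fun x => ‖z x‖ * ⨆ φ : S, ‖f φ x‖) μ :=
  iSup_essSup_eq_essSup_iSup_general μ z hz f C hf
end
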